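/- arXiv:2502.19620 — 6 statements merged into one kernel-verified Lean document; each statement's English description precedes it below -/
import Mathlib

section
/- Proposition 1 (identification of DATT(g,t), not-yet-treated comparison, degenerate covariates): Suppose the parallel-gaps assumption based on the not-yet-treated group holds: E[Y_t(∞) − Y_{g−1}(∞) | G=g, S_s] − E[Y_t(∞) − Y_{g−1}(∞) | G=g, S_{s'}] = E[Y_t(∞) − Y_{g−1}(∞) | G>t, S_s] − E[Y_t(∞) − Y_{g−1}(∞) | G>t, S_{s'}]. Then DATT(g,t) = (E[Y_t − Y_{g−1} | G=g, S_s] − E[Y_t − Y_{g−1} | G=g, S_{s'}]) − (E[Y_t − Y_{g−1} | G>t, S_s] − E[Y_t − Y_{g−1} | G>t, S_{s'}]), where Y_τ denotes the observed outcome at period τ. -/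
/-!
On the cohort `G = g` no unit is treated at `g - 1 < g ≤ t`, so the observed gap `Y_t - Y_{g-1}`
is `Y_t(g) - Y_{g-1}(∞)`; on the not-yet-treated units `G > t` it is the untreated gap
`Y_t(∞) - Y_{g-1}(∞)`. Hence `DATT(g,t)` is the observed difference on the cohort minus the
difference of untreated gaps on the cohort, and parallel gaps replaces the latter by the observed
difference on the not-yet-treated units.
-/

open MeasureTheory ProbabilityTheory Set

section Conditioning

variable {Ω E : Type*} [MeasurableSpace Ω] {μ : Measure Ω} {s : Set Ω}

/-- `s` need not be measurable, so the comparison is made between measurable modifications. -/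
theorem ae_restrict_eq_of_eqOn [TopologicalSpace E] [TopologicalSpace.MetrizableSpace E]
    {f h : Ω → E} (hf : AEStronglyMeasurable f μ) (hh : AEStronglyMeasurable h μ)
    (hfh : EqOn f h s) : f =ᵐ[μ.restrict s] h := by
  have hmk : hf.mk f =ᵐ[μ.restrict s] hh.mk h := by
    rw [Filter.EventuallyEq,
      ae_restrict_iff (hf.stronglyMeasurable_mk.measurableSet_eq_fun hh.stronglyMeasurable_mk)]
    filter_upwards [hf.ae_eq_mk, hh.ae_eq_mk] with ω hfω hhω hω
    rw [← hfω, ← hhω, hfh hω]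
  exact Filter.EventuallyEq.trans (ae_restrict_le hf.ae_eq_mk)
    (hmk.trans (ae_restrict_le hh.ae_eq_mk.symm))

theorem integral_cond_congr_of_eqOn [NormedAddCommGroup E] [NormedSpace ℝ E]
    {f h : Ω → E} (hf : AEStronglyMeasurable f μ) (hh : AEStronglyMeasurable h μ)
    (hfh : EqOn f h s) : ∫ ω, f ω ∂μ[|s] = ∫ ω, h ω ∂μ[|s] :=
  integral_congr_ae <| Measure.ae_smul_measure (ae_restrict_eq_of_eqOn hf hh hfh) _

theorem MeasureTheory.Integrable.cond [NormedAddCommGroup E] {f : Ω → E} (hf : Integrable f μ)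
    (s : Set Ω) : Integrable f μ[|s] := by
  rcases eq_or_ne (μ s) 0 with hs | hs
  · simp [cond_eq_zero_of_meas_eq_zero hs]
  · exact hf.restrict.smul_measure (ENNReal.inv_ne_top.mpr hs)

end Conditioning

section StaggeredAdoption

variable {Ω : Type*} {G : Ω → ℕ∞} {Y : ℕ → ℕ∞ → Ω → ℝ} {Yobs : ℕ → Ω → ℝ}

theorem observed_gap_eqOn_cohort
    (hYobs : ∀ τ ω, Yobs τ ω = if G ω ≤ (τ : ℕ∞) then Y τ (G ω) ω else Y τ ⊤ ω)
    {r g t : ℕ} (hrg : r < g) (hgt : g ≤ t) :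
    EqOn (fun ω ↦ Yobs t ω - Yobs r ω) (fun ω ↦ Y t g ω - Y r ⊤ ω) {ω | G ω = g} := by
  intro ω (hω : G ω = g)
  have hgt' : (g : ℕ∞) ≤ t := by exact_mod_cast hgt
  have hrg' : ¬ (g : ℕ∞) ≤ r := by exact_mod_cast hrg.not_ge
  simp only [hYobs, hω, if_pos hgt', if_neg hrg']

theorem observed_gap_eqOn_not_yet_treated
    (hYobs : ∀ τ ω, Yobs τ ω = if G ω ≤ (τ : ℕ∞) then Y τ (G ω) ω else Y τ ⊤ ω)
    {r t : ℕ} (hrt : r ≤ t) :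
    EqOn (fun ω ↦ Yobs t ω - Yobs r ω) (fun ω ↦ Y t ⊤ ω - Y r ⊤ ω) {ω | (t : ℕ∞) < G ω} := by
  intro ω (hω : (t : ℕ∞) < G ω)
  have hrω : (r : ℕ∞) < G ω := lt_of_le_of_lt (by exact_mod_cast hrt) hω
  simp only [hYobs, if_neg hω.not_ge, if_neg hrω.not_ge]

end StaggeredAdoption

/-- `⊤ : ℕ∞` is the never-treated cohort `∞`, and `Ssᶜ` is the subgroup `s'`. -/
theorem datt_identification_not_yet_treated_general
    {Ω : Type*} [MeasurableSpace Ω] (μ : Measure Ω)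
    (G : Ω → ℕ∞)
    (Ss : Set Ω)
    (Y : ℕ → ℕ∞ → Ω → ℝ)
    (hIntY : ∀ τ γ, Integrable (Y τ γ) μ)
    (Yobs : ℕ → Ω → ℝ)
    (hYobs : ∀ τ ω, Yobs τ ω = if G ω ≤ (τ : ℕ∞) then Y τ (G ω) ω else Y τ ⊤ ω)
    (hIntYobs : ∀ τ, Integrable (Yobs τ) μ)
    (g t : ℕ) (hg1 : 1 ≤ g) (hgt : g ≤ t)
    -- Parallel gaps based on the not-yet-treated group
    (hPG : (∫ ω, (Y t ⊤ ω - Y (g-1) ⊤ ω) ∂(μ[|{ω | G ω = (g : ℕ∞)} ∩ Ss]))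
          - (∫ ω, (Y t ⊤ ω - Y (g-1) ⊤ ω) ∂(μ[|{ω | G ω = (g : ℕ∞)} ∩ Ssᶜ]))
        = (∫ ω, (Y t ⊤ ω - Y (g-1) ⊤ ω) ∂(μ[|{ω | (t : ℕ∞) < G ω} ∩ Ss]))
          - (∫ ω, (Y t ⊤ ω - Y (g-1) ⊤ ω) ∂(μ[|{ω | (t : ℕ∞) < G ω} ∩ Ssᶜ]))) :
    -- DATT(g,t) equals the triple-difference of observed outcomes
    (∫ ω, (Y t (g : ℕ∞) ω - Y t ⊤ ω) ∂(μ[|{ω | G ω = (g : ℕ∞)} ∩ Ss]))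
      - (∫ ω, (Y t (g : ℕ∞) ω - Y t ⊤ ω) ∂(μ[|{ω | G ω = (g : ℕ∞)} ∩ Ssᶜ]))
    = ((∫ ω, (Yobs t ω - Yobs (g-1) ω) ∂(μ[|{ω | G ω = (g : ℕ∞)} ∩ Ss]))
        - (∫ ω, (Yobs t ω - Yobs (g-1) ω) ∂(μ[|{ω | G ω = (g : ℕ∞)} ∩ Ssᶜ])))
      - ((∫ ω, (Yobs t ω - Yobs (g-1) ω) ∂(μ[|{ω | (t : ℕ∞) < G ω} ∩ Ss]))
        - (∫ ω, (Yobs t ω - Yobs (g-1) ω) ∂(μ[|{ω | (t : ℕ∞) < G ω} ∩ Ssᶜ]))) := by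
  have hmeas : ∀ τ γ, AEStronglyMeasurable (Y τ γ) μ := fun τ γ ↦ (hIntY τ γ).aestronglyMeasurable
  have hmeasObs := ((hIntYobs t).sub (hIntYobs (g - 1))).aestronglyMeasurable
  have hcohort (S : Set Ω) :
      ∫ ω, (Yobs t ω - Yobs (g-1) ω) ∂(μ[|{ω | G ω = (g : ℕ∞)} ∩ S])
        = ∫ ω, (Y t g ω - Y (g-1) ⊤ ω) ∂(μ[|{ω | G ω = (g : ℕ∞)} ∩ S]) :=
    integral_cond_congr_of_eqOn hmeasObs ((hmeas _ _).sub (hmeas _ _))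
      ((observed_gap_eqOn_cohort hYobs (by omega) hgt).mono inter_subset_left)
  have hnotYet (S : Set Ω) :
      ∫ ω, (Yobs t ω - Yobs (g-1) ω) ∂(μ[|{ω | (t : ℕ∞) < G ω} ∩ S])
        = ∫ ω, (Y t ⊤ ω - Y (g-1) ⊤ ω) ∂(μ[|{ω | (t : ℕ∞) < G ω} ∩ S]) :=
    integral_cond_congr_of_eqOn hmeasObs ((hmeas _ _).sub (hmeas _ _))
      ((observed_gap_eqOn_not_yet_treated hYobs (by omega)).mono inter_subset_left)
  have hsub (τ γ τ' γ' : _) (S : Set Ω) :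
      ∫ ω, (Y τ γ ω - Y τ' γ' ω) ∂(μ[|S]) = ∫ ω, Y τ γ ω ∂(μ[|S]) - ∫ ω, Y τ' γ' ω ∂(μ[|S]) :=
    integral_sub ((hIntY τ γ).cond S) ((hIntY τ' γ').cond S)
  rw [hcohort, hcohort, hnotYet, hnotYet]
  simp only [hsub] at hPG ⊢
  linarith

/-- Proposition 1 (identification of `DATT(g,t)`, not-yet-treated comparison,
degenerate covariates). `G` is the cohort variable (`⊤` = never treated),
`Ss` is subgroup `s`, `Ssᶜ` is subgroup `s'`. `Y τ γ` is the potential outcome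
`Y_τ(γ)` and `Yobs τ` is the observed outcome at period `τ`. -/
theorem datt_identification_not_yet_treated
    {Ω : Type*} [MeasurableSpace Ω] (μ : Measure Ω) [IsProbabilityMeasure μ]
    (T : ℕ) (hT : 1 ≤ T)
    (G : Ω → ℕ∞) (hGrange : ∀ ω, G ω = ⊤ ∨ (1 ≤ G ω ∧ G ω ≤ (T : ℕ∞)))
    (Ss : Set Ω)
    (Y : ℕ → ℕ∞ → Ω → ℝ)
    (hIntY : ∀ τ γ, Integrable (Y τ γ) μ)
    (Yobs : ℕ → Ω → ℝ)
    (hYobs : ∀ τ ω, Yobs τ ω = if G ω ≤ (τ : ℕ∞) then Y τ (G ω) ω else Y τ ⊤ ω)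
    (hIntYobs : ∀ τ, Integrable (Yobs τ) μ)
    (g t : ℕ) (hg1 : 1 ≤ g) (hgt : g ≤ t) (htT : t ≤ T)
    (hpos1 : 0 < μ ({ω | G ω = (g : ℕ∞)} ∩ Ss))
    (hpos2 : 0 < μ ({ω | G ω = (g : ℕ∞)} ∩ Ssᶜ))
    (hpos3 : 0 < μ ({ω | (t : ℕ∞) < G ω} ∩ Ss))
    (hpos4 : 0 < μ ({ω | (t : ℕ∞) < G ω} ∩ Ssᶜ))
    -- Parallel gaps based on the not-yet-treated group
    (hPG : (∫ ω, (Y t ⊤ ω - Y (g-1) ⊤ ω) ∂(μ[|{ω | G ω = (g : ℕ∞)} ∩ Ss]))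
          - (∫ ω, (Y t ⊤ ω - Y (g-1) ⊤ ω) ∂(μ[|{ω | G ω = (g : ℕ∞)} ∩ Ssᶜ]))
        = (∫ ω, (Y t ⊤ ω - Y (g-1) ⊤ ω) ∂(μ[|{ω | (t : ℕ∞) < G ω} ∩ Ss]))
          - (∫ ω, (Y t ⊤ ω - Y (g-1) ⊤ ω) ∂(μ[|{ω | (t : ℕ∞) < G ω} ∩ Ssᶜ]))) :
    -- DATT(g,t) equals the triple-difference of observed outcomes
    (∫ ω, (Y t (g : ℕ∞) ω - Y t ⊤ ω) ∂(μ[|{ω | G ω = (g : ℕ∞)} ∩ Ss]))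
      - (∫ ω, (Y t (g : ℕ∞) ω - Y t ⊤ ω) ∂(μ[|{ω | G ω = (g : ℕ∞)} ∩ Ssᶜ]))
    = ((∫ ω, (Yobs t ω - Yobs (g-1) ω) ∂(μ[|{ω | G ω = (g : ℕ∞)} ∩ Ss]))
        - (∫ ω, (Yobs t ω - Yobs (g-1) ω) ∂(μ[|{ω | G ω = (g : ℕ∞)} ∩ Ssᶜ])))
      - ((∫ ω, (Yobs t ω - Yobs (g-1) ω) ∂(μ[|{ω | (t : ℕ∞) < G ω} ∩ Ss]))
        - (∫ ω, (Yobs t ω - Yobs (g-1) ω) ∂(μ[|{ω | (t : ℕ∞) < G ω} ∩ Ssᶜ]))) :=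
  datt_identification_not_yet_treated_general μ G Ss Y hIntY Yobs hYobs hIntYobs g t hg1 hgt hPG
end

section
/- Identification of the subgroup-s ATT under an unaffected comparison subgroup (Section 3.2): Suppose the parallel-gaps assumption based on the never-treated group holds: E[Y_t(∞) − Y_{g−1}(∞) | G=g, S_s] − E[Y_t(∞) − Y_{g−1}(∞) | G=g, S_{s'}] = E[Y_t(∞) − Y_{g−1}(∞) | G=∞, S_s] − E[Y_t(∞) − Y_{g−1}(∞) | G=∞, S_{s'}], and suppose subgroup s' is unaffected by the treatment (Assumption 5): E[Y_t(g) − Y_t(∞) | G=g, S_{s'}] = 0. Then the average treatment effect on the treated for subgroup s is identified by the triple-difference formula: E[Y_t(g) − Y_t(∞) | G=g, S_s] = (E[Y_t − Y_{g−1} | G=g, S_s] − E[Y_t − Y_{g−1} | G=g, S_{s'}]) − (E[Y_t − Y_{g−1} | G=∞, S_s] − E[Y_t − Y_{g−1} | G=∞, S_{s'}]), where Y_τ denotes the observed outcome at period τ. -/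
open MeasureTheory ProbabilityTheory
open scoped Classical

/-- A.e. equality w.r.t. a restricted measure from pointwise equality on the set,
for a.e. strongly measurable functions, without measurability of the set. -/
lemma ae_restrict_eq_of_eqOn_s4 {Ω : Type*} [MeasurableSpace Ω] {μ : Measure Ω}
    {A : Set Ω} {f g : Ω → ℝ}
    (hf : AEStronglyMeasurable f μ) (hg : AEStronglyMeasurable g μ)
    (h : ∀ ω ∈ A, f ω = g ω) : f =ᵐ[μ.restrict A] g := by
  have hd : AEStronglyMeasurable (fun ω => f ω - g ω) μ := hf.sub hg
  set d' := hd.mk _ with hd'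
  have hmk : (fun ω => f ω - g ω) =ᵐ[μ] d' := hd.ae_eq_mk
  have hNull : μ {ω | (fun ω => f ω - g ω) ω ≠ d' ω} = 0 := by
    simpa [Filter.EventuallyEq, ae_iff] using hmk
  have hmeas : MeasurableSet {ω | d' ω ≠ 0} := by
    have := hd.stronglyMeasurable_mk.measurable
    exact (this (measurableSet_singleton 0)).compl
  have h0 : μ.restrict A {ω | d' ω ≠ 0} = 0 := by
    rw [Measure.restrict_apply hmeas]
    refine measure_mono_null ?_ hNull
    intro ω hω
    obtain ⟨hω1, hω2⟩ := hω
    intro hc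
    apply hω1
    have hc' : f ω - g ω = d' ω := hc
    rw [← hc', h ω hω2, sub_self]
  have h1 : d' =ᵐ[μ.restrict A] 0 := by
    rw [Filter.EventuallyEq, ae_iff]
    simpa using h0
  have h2 : (fun ω => f ω - g ω) =ᵐ[μ.restrict A] d' :=
    ae_restrict_of_ae hmk
  have h3 : (fun ω => f ω - g ω) =ᵐ[μ.restrict A] 0 := h2.trans h1
  filter_upwards [h3] with ω hω
  have : f ω - g ω = 0 := hω
  linarith

lemma cond_integral_congr_on {Ω : Type*} [MeasurableSpace Ω] {μ : Measure Ω}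
    {A : Set Ω} {f g : Ω → ℝ}
    (hf : AEStronglyMeasurable f μ) (hg : AEStronglyMeasurable g μ)
    (h : ∀ ω ∈ A, f ω = g ω) :
    ∫ ω, f ω ∂(μ[|A]) = ∫ ω, g ω ∂(μ[|A]) := by
  rw [ProbabilityTheory.cond, integral_smul_measure, integral_smul_measure]
  congr 1
  exact integral_congr_ae (ae_restrict_eq_of_eqOn_s4 hf hg h)

lemma integrable_cond {Ω : Type*} [MeasurableSpace Ω] {μ : Measure Ω}
    {A : Set Ω} {f : Ω → ℝ} (hf : Integrable f μ) (hA : μ A ≠ 0) :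
    Integrable f (μ[|A]) := by
  rw [ProbabilityTheory.cond]
  exact (hf.restrict).smul_measure (by simp [hA])


/-- Identification of the subgroup-`s` ATT under an unaffected comparison subgroup
(Section 3.2): parallel gaps based on the never-treated group, plus the unaffected
subgroup assumption `E[Y_t(g) − Y_t(∞) | G=g, S_{s'}] = 0`, identify
`E[Y_t(g) − Y_t(∞) | G=g, S_s]` by the triple-difference formula. -/
theorem att_identification_unaffected_subgroup
    {Ω : Type*} [MeasurableSpace Ω] (μ : Measure Ω) [IsProbabilityMeasure μ]
    (T : ℕ) (hT : 1 ≤ T)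
    (G : Ω → ℕ∞) (hGrange : ∀ ω, G ω = ⊤ ∨ (1 ≤ G ω ∧ G ω ≤ (T : ℕ∞)))
    (Ss : Set Ω)
    (Y : ℕ → ℕ∞ → Ω → ℝ)
    (hIntY : ∀ τ γ, Integrable (Y τ γ) μ)
    (Yobs : ℕ → Ω → ℝ)
    (hYobs : ∀ τ ω, Yobs τ ω = if G ω ≤ (τ : ℕ∞) then Y τ (G ω) ω else Y τ ⊤ ω)
    (hIntYobs : ∀ τ, Integrable (Yobs τ) μ)
    (g t : ℕ) (hg1 : 1 ≤ g) (hgt : g ≤ t) (htT : t ≤ T)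
    (hpos1 : 0 < μ ({ω | G ω = (g : ℕ∞)} ∩ Ss))
    (hpos2 : 0 < μ ({ω | G ω = (g : ℕ∞)} ∩ Ssᶜ))
    (hpos3 : 0 < μ ({ω | G ω = ⊤} ∩ Ss))
    (hpos4 : 0 < μ ({ω | G ω = ⊤} ∩ Ssᶜ))
    -- Parallel gaps based on the never-treated group
    (hPG : (∫ ω, (Y t ⊤ ω - Y (g-1) ⊤ ω) ∂(μ[|{ω | G ω = (g : ℕ∞)} ∩ Ss]))
          - (∫ ω, (Y t ⊤ ω - Y (g-1) ⊤ ω) ∂(μ[|{ω | G ω = (g : ℕ∞)} ∩ Ssᶜ]))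
        = (∫ ω, (Y t ⊤ ω - Y (g-1) ⊤ ω) ∂(μ[|{ω | G ω = ⊤} ∩ Ss]))
          - (∫ ω, (Y t ⊤ ω - Y (g-1) ⊤ ω) ∂(μ[|{ω | G ω = ⊤} ∩ Ssᶜ])))
    -- Unaffected subgroup (Assumption 5): the ATT for subgroup s' is zero
    (hUnaffected :
      (∫ ω, (Y t (g : ℕ∞) ω - Y t ⊤ ω) ∂(μ[|{ω | G ω = (g : ℕ∞)} ∩ Ssᶜ])) = 0) :
    -- ATT for subgroup s equals the triple-difference of observed outcomes
    (∫ ω, (Y t (g : ℕ∞) ω - Y t ⊤ ω) ∂(μ[|{ω | G ω = (g : ℕ∞)} ∩ Ss]))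
    = ((∫ ω, (Yobs t ω - Yobs (g-1) ω) ∂(μ[|{ω | G ω = (g : ℕ∞)} ∩ Ss]))
        - (∫ ω, (Yobs t ω - Yobs (g-1) ω) ∂(μ[|{ω | G ω = (g : ℕ∞)} ∩ Ssᶜ])))
      - ((∫ ω, (Yobs t ω - Yobs (g-1) ω) ∂(μ[|{ω | G ω = ⊤} ∩ Ss]))
        - (∫ ω, (Yobs t ω - Yobs (g-1) ω) ∂(μ[|{ω | G ω = ⊤} ∩ Ssᶜ]))) := by
  have mY : ∀ τ γ, AEStronglyMeasurable (Y τ γ) μ := fun τ γ => (hIntY τ γ).aestronglyMeasurable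
  have mObs : ∀ τ, AEStronglyMeasurable (Yobs τ) μ := fun τ => (hIntYobs τ).aestronglyMeasurable
  have hobs_g : ∀ ω, G ω = (g : ℕ∞) → Yobs t ω - Yobs (g-1) ω = Y t g ω - Y (g-1) ⊤ ω := by
    intro ω hω
    rw [hYobs, hYobs, hω, if_pos (by exact_mod_cast hgt), if_neg]
    intro hc
    have : g ≤ g - 1 := by exact_mod_cast hc
    omega
  have hobs_inf : ∀ τ, ∀ ω, G ω = ⊤ → Yobs τ ω = Y τ ⊤ ω := by
    intro τ ω hω
    rw [hYobs, hω, if_neg (by simp)]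
  have e1 : (∫ ω, (Yobs t ω - Yobs (g-1) ω) ∂(μ[|{ω | G ω = (g : ℕ∞)} ∩ Ss]))
      = ∫ ω, (Y t g ω - Y (g-1) ⊤ ω) ∂(μ[|{ω | G ω = (g : ℕ∞)} ∩ Ss]) :=
    cond_integral_congr_on ((mObs t).sub (mObs (g-1))) ((mY t g).sub (mY (g-1) ⊤))
      (fun ω hω => hobs_g ω hω.1)
  have e2 : (∫ ω, (Yobs t ω - Yobs (g-1) ω) ∂(μ[|{ω | G ω = (g : ℕ∞)} ∩ Ssᶜ]))
      = ∫ ω, (Y t g ω - Y (g-1) ⊤ ω) ∂(μ[|{ω | G ω = (g : ℕ∞)} ∩ Ssᶜ]) :=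
    cond_integral_congr_on ((mObs t).sub (mObs (g-1))) ((mY t g).sub (mY (g-1) ⊤))
      (fun ω hω => hobs_g ω hω.1)
  have e3 : (∫ ω, (Yobs t ω - Yobs (g-1) ω) ∂(μ[|{ω | G ω = ⊤} ∩ Ss]))
      = ∫ ω, (Y t ⊤ ω - Y (g-1) ⊤ ω) ∂(μ[|{ω | G ω = ⊤} ∩ Ss]) :=
    cond_integral_congr_on ((mObs t).sub (mObs (g-1))) ((mY t ⊤).sub (mY (g-1) ⊤))
      (fun ω hω => by rw [hobs_inf t ω hω.1, hobs_inf (g-1) ω hω.1])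
  have e4 : (∫ ω, (Yobs t ω - Yobs (g-1) ω) ∂(μ[|{ω | G ω = ⊤} ∩ Ssᶜ]))
      = ∫ ω, (Y t ⊤ ω - Y (g-1) ⊤ ω) ∂(μ[|{ω | G ω = ⊤} ∩ Ssᶜ]) :=
    cond_integral_congr_on ((mObs t).sub (mObs (g-1))) ((mY t ⊤).sub (mY (g-1) ⊤))
      (fun ω hω => by rw [hobs_inf t ω hω.1, hobs_inf (g-1) ω hω.1])
  have hfun : (fun ω => Y t g ω - Y (g-1) ⊤ ω)
      = fun ω => (Y t (g : ℕ∞) ω - Y t ⊤ ω) + (Y t ⊤ ω - Y (g-1) ⊤ ω) := by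
    funext ω; ring
  have s1 : (∫ ω, (Y t g ω - Y (g-1) ⊤ ω) ∂(μ[|{ω | G ω = (g : ℕ∞)} ∩ Ss]))
      = (∫ ω, (Y t (g : ℕ∞) ω - Y t ⊤ ω) ∂(μ[|{ω | G ω = (g : ℕ∞)} ∩ Ss]))
        + ∫ ω, (Y t ⊤ ω - Y (g-1) ⊤ ω) ∂(μ[|{ω | G ω = (g : ℕ∞)} ∩ Ss]) := by
    rw [hfun]
    exact integral_add (integrable_cond ((hIntY t g).sub (hIntY t ⊤)) hpos1.ne')
      (integrable_cond ((hIntY t ⊤).sub (hIntY (g-1) ⊤)) hpos1.ne')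
  have s2 : (∫ ω, (Y t g ω - Y (g-1) ⊤ ω) ∂(μ[|{ω | G ω = (g : ℕ∞)} ∩ Ssᶜ]))
      = (∫ ω, (Y t (g : ℕ∞) ω - Y t ⊤ ω) ∂(μ[|{ω | G ω = (g : ℕ∞)} ∩ Ssᶜ]))
        + ∫ ω, (Y t ⊤ ω - Y (g-1) ⊤ ω) ∂(μ[|{ω | G ω = (g : ℕ∞)} ∩ Ssᶜ]) := by
    rw [hfun]
    exact integral_add (integrable_cond ((hIntY t g).sub (hIntY t ⊤)) hpos2.ne')
      (integrable_cond ((hIntY t ⊤).sub (hIntY (g-1) ⊤)) hpos2.ne')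
  rw [e1, e2, e3, e4, s1, s2, hUnaffected]
  linarith [hPG]
end

section
/- Orthogonality of the doubly-robust weights to covariate functions (Proof A.7): Let A, B be events with μ(A) > 0, let π_A and π_B be versions of the conditional expectations E[1_A | 𝒳] and E[1_B | 𝒳], and suppose there is ε > 0 with π_B ≥ ε almost surely. Define the weights w₁ = 1_A / μ(A) and w₂ = (1_B · π_A/π_B) / E[1_B · π_A/π_B]. Then for every bounded 𝒳-measurable function h : Ω → ℝ, E[(w₁ − w₂) · h] = 0. -/
open MeasureTheory ProbabilityTheory

/-- Orthogonality of the doubly-robust weights to covariate functions (Proof A.7):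
with `w₁ = 1_A / μ(A)` and `w₂ = (1_B · πA/πB) / E[1_B · πA/πB]`, for every bounded
`𝒳`-measurable `h`, `E[(w₁ − w₂) · h] = 0`. -/
theorem dr_weights_orthogonality
    {Ω : Type*} (𝒳 : MeasurableSpace Ω) [m0 : MeasurableSpace Ω] (μ : Measure Ω) [IsProbabilityMeasure μ]
    (h𝒳 : 𝒳 ≤ m0)
    (A B : Set Ω) (hA : MeasurableSet A) (hB : MeasurableSet B) (hApos : 0 < μ A)
    (πA πB : Ω → ℝ)
    (hπA_meas : StronglyMeasurable[𝒳] πA)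
    (hπA : πA =ᵐ[μ] μ[A.indicator (fun _ => (1 : ℝ)) | 𝒳])
    (hπB_meas : StronglyMeasurable[𝒳] πB)
    (hπB : πB =ᵐ[μ] μ[B.indicator (fun _ => (1 : ℝ)) | 𝒳])
    (ε : ℝ) (hε : 0 < ε) (hπB_bd : ∀ᵐ ω ∂μ, ε ≤ πB ω)
    (w₁ w₂ : Ω → ℝ)
    (hw₁ : w₁ = fun ω => A.indicator (fun _ => (1 : ℝ)) ω / (μ A).toReal)
    (hw₂ : w₂ = fun ω => (B.indicator (fun _ => (1 : ℝ)) ω * πA ω / πB ω)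
        / ∫ ω', B.indicator (fun _ => (1 : ℝ)) ω' * πA ω' / πB ω' ∂μ) :
    ∀ h : Ω → ℝ, StronglyMeasurable[𝒳] h → (∃ Cb : ℝ, ∀ ω, |h ω| ≤ Cb) →
      (∫ ω, (w₁ ω - w₂ ω) * h ω ∂μ) = 0 := by
  intro h hmeas ⟨Cb, hCb⟩
  set indA := A.indicator (fun _ => (1 : ℝ)) with hindA
  set indB := B.indicator (fun _ => (1 : ℝ)) with hindB
  -- basic integrability of bounded a.e.-strongly-measurable functions
  have integ_of_bd : ∀ (f : Ω → ℝ) (c : ℝ), AEStronglyMeasurable[m0] f μ →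
      (∀ᵐ ω ∂μ, |f ω| ≤ c) → Integrable f μ := by
    intro f c hf hb
    exact (memLp_top_of_bound hf c (by simpa [Real.norm_eq_abs] using hb)).integrable le_top
  have hind_le : ∀ (S : Set Ω) (ω : Ω), |S.indicator (fun _ => (1 : ℝ)) ω| ≤ 1 := by
    intro S ω
    by_cases hω : ω ∈ S <;> simp [Set.indicator_apply, hω]
  have hind_int : ∀ (S : Set Ω), MeasurableSet[m0] S →
      Integrable (S.indicator fun _ => (1 : ℝ)) μ := fun S hS =>
    integ_of_bd _ 1 ((measurable_const.indicator hS).aestronglyMeasurable)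
      (Filter.Eventually.of_forall (hind_le S))
  have hindA_int : Integrable indA μ := hind_int A hA
  have hindB_int : Integrable indB μ := hind_int B hB
  -- the key identity: for bounded 𝒳-measurable g, ∫ 1_S g = ∫ πS g
  have key : ∀ (S : Set Ω), MeasurableSet S → ∀ (πS : Ω → ℝ),
      (πS =ᵐ[μ] μ[S.indicator (fun _ => (1 : ℝ)) | 𝒳]) →
      ∀ (g : Ω → ℝ), StronglyMeasurable[𝒳] g → ∀ (c : ℝ), (∀ᵐ ω ∂μ, |g ω| ≤ c) →
      ∫ ω, S.indicator (fun _ => (1 : ℝ)) ω * g ω ∂μ = ∫ ω, πS ω * g ω ∂μ := by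
    intro S hS πS hπS g hg c hgc
    have hind_intS : Integrable (S.indicator fun _ => (1 : ℝ)) μ := hind_int S hS
    have hpull : μ[g * S.indicator (fun _ => (1 : ℝ)) | 𝒳]
        =ᵐ[μ] g * μ[S.indicator (fun _ => (1 : ℝ)) | 𝒳] :=
      condExp_stronglyMeasurable_mul_of_bound h𝒳 hg hind_intS c
        (by simpa [Real.norm_eq_abs] using hgc)
    calc ∫ ω, S.indicator (fun _ => (1 : ℝ)) ω * g ω ∂μ
        = ∫ ω, (g * S.indicator (fun _ => (1 : ℝ))) ω ∂μ := by
          simp_rw [Pi.mul_apply, mul_comm]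
      _ = ∫ ω, (μ[g * S.indicator (fun _ => (1 : ℝ)) | 𝒳]) ω ∂μ :=
          (integral_condExp h𝒳).symm
      _ = ∫ ω, g ω * (μ[S.indicator (fun _ => (1 : ℝ)) | 𝒳]) ω ∂μ :=
          integral_congr_ae hpull
      _ = ∫ ω, πS ω * g ω ∂μ := by
          refine integral_congr_ae ?_
          filter_upwards [hπS] with ω hω
          rw [hω, mul_comm]
  -- a.e. bounds on πA and πB
  have hπA01 : ∀ᵐ ω ∂μ, 0 ≤ πA ω ∧ πA ω ≤ 1 := by
    have h0 : (0 : Ω → ℝ) ≤ᵐ[μ] μ[indA | 𝒳] :=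
      condExp_nonneg (Filter.Eventually.of_forall fun ω => Set.indicator_nonneg
        (fun _ _ => zero_le_one) ω)
    have h1 : μ[indA | 𝒳] ≤ᵐ[μ] μ[(fun _ => (1 : ℝ)) | 𝒳] :=
      condExp_mono hindA_int (integrable_const 1)
        (Filter.Eventually.of_forall fun ω => Set.indicator_le_self' (fun _ _ => zero_le_one) ω)
    have hc := condExp_const (μ := μ) h𝒳 (1 : ℝ)
    rw [hc] at h1
    filter_upwards [hπA, h0, h1] with ω hω h0ω h1ω
    constructor
    · rw [hω]; exact h0ω
    · rw [hω]; exact h1ω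
  have hπB_pos : ∀ᵐ ω ∂μ, 0 < πB ω := by
    filter_upwards [hπB_bd] with ω hω; linarith
  -- bound on the ratio function
  have hratio_bd : ∀ᵐ ω ∂μ, |πA ω / πB ω| ≤ 1 / ε := by
    filter_upwards [hπA01, hπB_bd] with ω h1 h2
    rw [abs_div]
    have hπBω : 0 < πB ω := by linarith
    rw [abs_of_nonneg h1.1, abs_of_pos hπBω]
    exact div_le_div₀ (by positivity) h1.2 hε h2
  have hratio_meas : StronglyMeasurable[𝒳] (fun ω => πA ω / πB ω) :=
    (hπA_meas.measurable.div hπB_meas.measurable).stronglyMeasurable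
  -- g₂ := (πA/πB)·h
  have hg₂_meas : StronglyMeasurable[𝒳] (fun ω => πA ω / πB ω * h ω) := hratio_meas.mul hmeas
  have hg₂_bd : ∀ᵐ ω ∂μ, |πA ω / πB ω * h ω| ≤ 1 / ε * Cb := by
    filter_upwards [hratio_bd] with ω hω
    rw [abs_mul]
    exact mul_le_mul hω (hCb ω) (abs_nonneg _) (by positivity)
  -- the three integral identities
  have E1 : ∫ ω, indA ω * h ω ∂μ = ∫ ω, πA ω * h ω ∂μ :=
    key A hA πA hπA h hmeas Cb (Filter.Eventually.of_forall hCb)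
  have E2 : ∫ ω, indB ω * (πA ω / πB ω * h ω) ∂μ = ∫ ω, πA ω * h ω ∂μ := by
    rw [key B hB πB hπB _ hg₂_meas (1 / ε * Cb) hg₂_bd]
    refine integral_congr_ae ?_
    filter_upwards [hπB_pos] with ω hω
    field_simp
  have hintπA : ∫ ω, πA ω ∂μ = (μ A).toReal := by
    rw [integral_congr_ae hπA, integral_condExp h𝒳]
    exact (by simpa [Measure.real] using @integral_indicator_one Ω m0 μ A hA :
      ∫ x, A.indicator 1 x ∂μ = (μ A).toReal)
  have E3 : ∫ ω', indB ω' * πA ω' / πB ω' ∂μ = (μ A).toReal := by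
    have h1 := key B hB πB hπB (fun ω => πA ω / πB ω) hratio_meas (1 / ε) hratio_bd
    have h2 : ∫ ω', indB ω' * πA ω' / πB ω' ∂μ
        = ∫ ω, indB ω * (πA ω / πB ω) ∂μ := by
      refine integral_congr_ae (Filter.Eventually.of_forall fun ω => ?_)
      ring
    rw [h2, h1, ← hintπA]
    refine integral_congr_ae ?_
    filter_upwards [hπB_pos] with ω hω
    field_simp
  -- integrability of the two pieces
  have hint1 : Integrable (fun ω => indA ω * h ω) μ := by
    refine integ_of_bd _ Cb
      (((measurable_const.indicator hA).mul
        (hmeas.mono h𝒳).measurable).aestronglyMeasurable)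
      (Filter.Eventually.of_forall fun ω => ?_)
    rw [abs_mul]
    calc |indA ω| * |h ω| ≤ 1 * |h ω| :=
          mul_le_mul_of_nonneg_right (hind_le A ω) (abs_nonneg _)
      _ = |h ω| := one_mul _
      _ ≤ Cb := hCb ω
  have hint2 : Integrable (fun ω => indB ω * (πA ω / πB ω * h ω)) μ := by
    refine integ_of_bd _ (1 / ε * Cb)
      (((measurable_const.indicator hB).mul
        (hg₂_meas.mono h𝒳).measurable).aestronglyMeasurable) ?_
    filter_upwards [hg₂_bd] with ω hω
    rw [abs_mul]
    calc |indB ω| * |πA ω / πB ω * h ω| ≤ 1 * |πA ω / πB ω * h ω| :=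
          mul_le_mul_of_nonneg_right (hind_le B ω) (abs_nonneg _)
      _ = |πA ω / πB ω * h ω| := one_mul _
      _ ≤ 1 / ε * Cb := hω
  -- finish
  rw [hw₁, hw₂]
  have hrw : ∀ ω, (indA ω / (μ A).toReal
      - (indB ω * πA ω / πB ω) / ∫ ω', indB ω' * πA ω' / πB ω' ∂μ) * h ω
      = ((μ A).toReal)⁻¹ * (indA ω * h ω - indB ω * (πA ω / πB ω * h ω)) := by
    intro ω
    rw [E3]
    ring
  simp_rw [hrw]
  rw [integral_const_mul, integral_sub hint1 hint2, E1, E2, sub_self, mul_zero]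
end

section
/- Inverse-propensity group-swap identity (key step in Proof A.5): Let A, B be events, let π_A and π_B be versions of the conditional expectations E[1_A | 𝒳] and E[1_B | 𝒳], and suppose there is ε > 0 with π_B ≥ ε almost surely. Let f, f̃ : Ω → ℝ be measurable with 1_B·f and 1_A·f̃ integrable, and suppose there exists an integrable 𝒳-measurable function m : Ω → ℝ such that, almost surely, m · π_B = E[1_B · f | 𝒳] and m · π_A = E[1_A · f̃ | 𝒳] (that is, the 𝒳-conditional means of f on B and of f̃ on A coincide). Then E[1_B · (π_A/π_B) · f] = E[1_A · f̃]. -/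
open MeasureTheory ProbabilityTheory

lemma aux_indicator_one_integrable {Ω : Type*} {mΩ : MeasurableSpace Ω} (μ : MeasureTheory.Measure Ω)
    [MeasureTheory.IsFiniteMeasure μ] {A : Set Ω} (hA : MeasurableSet A) :
    MeasureTheory.Integrable (A.indicator fun _ => (1 : ℝ)) μ :=
  (MeasureTheory.integrable_const 1).indicator hA

/-- Inverse-propensity group-swap identity (key step in Proof A.5): if the
`𝒳`-conditional means of `f` on `B` and of `f̃` on `A` coincide (both equal to
an `𝒳`-measurable `m`), then `E[1_B · (πA/πB) · f] = E[1_A · f̃]`. -/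
theorem ipw_group_swap
    {Ω : Type*} (𝒳 : MeasurableSpace Ω) [m0 : MeasurableSpace Ω] (μ : Measure Ω) [IsProbabilityMeasure μ]
    (h𝒳 : 𝒳 ≤ m0)
    (A B : Set Ω) (hA : MeasurableSet A) (hB : MeasurableSet B)
    (πA πB : Ω → ℝ)
    (hπA_meas : StronglyMeasurable[𝒳] πA)
    (hπA : πA =ᵐ[μ] μ[A.indicator (fun _ => (1 : ℝ)) | 𝒳])
    (hπB_meas : StronglyMeasurable[𝒳] πB)
    (hπB : πB =ᵐ[μ] μ[B.indicator (fun _ => (1 : ℝ)) | 𝒳])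
    (ε : ℝ) (hε : 0 < ε) (hπB_bd : ∀ᵐ ω ∂μ, ε ≤ πB ω)
    (f f_til : Ω → ℝ) (hf_meas : Measurable f) (hf_til_meas : Measurable f_til)
    (hInt_Bf : Integrable (B.indicator f) μ)
    (hInt_Af : Integrable (A.indicator f_til) μ)
    (m : Ω → ℝ) (hm_meas : StronglyMeasurable[𝒳] m) (hm_int : Integrable m μ)
    (hmB : (fun ω => m ω * πB ω) =ᵐ[μ] μ[B.indicator f | 𝒳])
    (hmA : (fun ω => m ω * πA ω) =ᵐ[μ] μ[A.indicator f_til | 𝒳]) :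
    (∫ ω, B.indicator (fun _ => (1 : ℝ)) ω * (πA ω / πB ω) * f ω ∂μ)
      = ∫ ω, A.indicator (fun _ => (1 : ℝ)) ω * f_til ω ∂μ := by
  set g : Ω → ℝ := fun ω => πA ω / πB ω with hg_def
  have hg_meas : StronglyMeasurable[𝒳] g :=
    (hπA_meas.measurable.div hπB_meas.measurable).stronglyMeasurable
  -- bounds on πA
  have hπA_nonneg : ∀ᵐ ω ∂μ, 0 ≤ πA ω := by
    filter_upwards [hπA, condExp_nonneg (μ := μ) (m := 𝒳)
      (f := A.indicator (fun _ => (1 : ℝ)))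
      (Filter.Eventually.of_forall fun ω => Set.indicator_nonneg (fun _ _ => zero_le_one) ω)]
      with ω h1 h2
    rw [h1]; exact h2
  have hπA_le_one : ∀ᵐ ω ∂μ, πA ω ≤ 1 := by
    have hind_int : Integrable (A.indicator (fun _ => (1 : ℝ))) μ :=
      aux_indicator_one_integrable (mΩ := m0) μ hA
    have hmono := condExp_mono (μ := μ) (m := 𝒳) hind_int (integrable_const (1 : ℝ))
      (Filter.Eventually.of_forall fun ω => by
        by_cases h : ω ∈ A <;> simp [Set.indicator_apply, h])
    have hc := condExp_const (μ := μ) h𝒳 (1 : ℝ)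
    filter_upwards [hπA, hmono] with ω h1 h2
    rw [h1]; exact h2.trans (le_of_eq (congrFun hc ω))
  have hg_bd : ∀ᵐ ω ∂μ, ‖g ω‖ ≤ 1 / ε := by
    filter_upwards [hπA_nonneg, hπA_le_one, hπB_bd] with ω h0 h1 hb
    have hgpos : 0 ≤ g ω := div_nonneg h0 (hε.le.trans hb)
    rw [Real.norm_eq_abs, abs_of_nonneg hgpos]
    exact div_le_div₀ zero_le_one h1 hε hb
  have hgf_int : Integrable (g * B.indicator f) μ := by
    refine Integrable.mono' (hInt_Bf.norm.const_mul (1 / ε))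
      (((hg_meas.mono h𝒳).aestronglyMeasurable).mul hInt_Bf.1) ?_
    filter_upwards [hg_bd] with ω hω
    rw [Pi.mul_apply, norm_mul]
    exact mul_le_mul_of_nonneg_right hω (norm_nonneg _)
  -- step 1: rewrite LHS integrand
  have h1 : (∫ ω, B.indicator (fun _ => (1 : ℝ)) ω * (πA ω / πB ω) * f ω ∂μ)
      = ∫ ω, (g * B.indicator f) ω ∂μ := by
    refine integral_congr_ae (Filter.Eventually.of_forall fun ω => ?_)
    by_cases h : ω ∈ B <;> simp [Set.indicator_apply, h, mul_comm, hg_def]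
  have hR : (∫ ω, A.indicator (fun _ => (1 : ℝ)) ω * f_til ω ∂μ)
      = ∫ ω, A.indicator f_til ω ∂μ := by
    refine integral_congr_ae (Filter.Eventually.of_forall fun ω => ?_)
    by_cases h : ω ∈ A <;> simp [Set.indicator_apply, h]
  rw [h1, hR,  -- marker
 ← integral_condExp h𝒳 (f := g * B.indicator f),
    ← integral_condExp h𝒳 (f := A.indicator f_til)]
  have h2 : μ[g * B.indicator f | 𝒳] =ᵐ[μ] μ[A.indicator f_til | 𝒳] := by
    refine (condExp_mul_of_stronglyMeasurable_left hg_meas hgf_int hInt_Bf).trans ?_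
    refine Filter.EventuallyEq.trans ?_ hmA
    filter_upwards [hmB, hπB_bd] with ω hB' hb
    have hne : πB ω ≠ 0 := (lt_of_lt_of_le hε hb).ne'
    rw [Pi.mul_apply, ← hB']
    show πA ω / πB ω * (m ω * πB ω) = m ω * πA ω
    field_simp
  exact integral_congr_ae h2
end

section
/- Proposition 3, inverse propensity weighting (never-treated comparison): Under the overlap condition and the conditional identification conditions (a), (b), (c) with comparison event C = {G = ∞}, the IPW estimand identifies the causal difference in ATTs: E[(w₁ − w₂)·ΔY] − E[(w₃ − w₄)·ΔY] = CDATT(g,t), where ΔY = Y_t − Y_{g−1} is the observed change in outcomes and the weights are w₁ = 1_{G=g}1_{S_s}/p, w₂ = (1_{G=g}1_{S_{s'}}·π_{g,s}/π_{g,s'}) / E[1_{G=g}1_{S_{s'}}·π_{g,s}/π_{g,s'}], w₃ = (1_C 1_{S_s}·π_{g,s}/π_{c,s}) / E[1_C 1_{S_s}·π_{g,s}/π_{c,s}], and w₄ = (1_C 1_{S_{s'}}·π_{g,s}/π_{c,s'}) / E[1_C 1_{S_{s'}}·π_{g,s}/π_{c,s'}]. -/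
open MeasureTheory ProbabilityTheory
open scoped Classical

private lemma intble_bddmul {Ω : Type*} {m0 : MeasurableSpace Ω} {μ : Measure Ω} {h X : Ω → ℝ}
    (hh : AEStronglyMeasurable h μ) {Cb : ℝ} (hbd : ∀ᵐ ω ∂μ, |h ω| ≤ Cb)
    (hX : Integrable X μ) : Integrable (fun ω => h ω * X ω) μ := by
  refine Integrable.mono' (hX.norm.const_mul Cb) (hh.mul hX.aestronglyMeasurable) ?_
  filter_upwards [hbd] with ω hω
  calc ‖h ω * X ω‖ = |h ω| * |X ω| := abs_mul _ _
    _ ≤ Cb * |X ω| := mul_le_mul_of_nonneg_right hω (abs_nonneg _)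
    _ = Cb * ‖X ω‖ := rfl

private lemma pull_out {Ω : Type*} {m0 : MeasurableSpace Ω} {μ : Measure Ω}
    [IsProbabilityMeasure μ] {𝒳 : MeasurableSpace Ω} (h𝒳 : 𝒳 ≤ m0)
    {h X : Ω → ℝ} (hh : StronglyMeasurable[𝒳] h) {Cb : ℝ} (hbd : ∀ᵐ ω ∂μ, |h ω| ≤ Cb)
    (hX : Integrable X μ) :
    ∫ ω, h ω * X ω ∂μ = ∫ ω, h ω * (μ[X|𝒳]) ω ∂μ := by
  haveI : SigmaFinite (μ.trim h𝒳) := by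
    haveI : IsFiniteMeasure (μ.trim h𝒳) := isFiniteMeasure_trim h𝒳
    infer_instance
  have h1 : μ[h * X|𝒳] =ᵐ[μ] h * μ[X|𝒳] :=
    condExp_stronglyMeasurable_mul_of_bound h𝒳 hh hX Cb
      (by simpa [Real.norm_eq_abs] using hbd)
  calc ∫ ω, h ω * X ω ∂μ = ∫ ω, (μ[h * X|𝒳]) ω ∂μ := (integral_condExp h𝒳).symm
    _ = ∫ ω, (h * μ[X|𝒳]) ω ∂μ := integral_congr_ae h1
    _ = ∫ ω, h ω * (μ[X|𝒳]) ω ∂μ := rfl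

/-- Proposition 3, inverse propensity weighting identification of `CDATT(g,t)`
with the never-treated comparison group `C = {G = ∞}`:
`E[(w₁ − w₂)·ΔY] − E[(w₃ − w₄)·ΔY] = CDATT(g,t)`. -/
theorem cdatt_ipw_identification_never_treated
    {Ω : Type*} [m0 : MeasurableSpace Ω] (μ : Measure Ω) [IsProbabilityMeasure μ]
    (T : ℕ) (hT : 1 ≤ T)
    (G : Ω → ℕ∞) (hGmeas : Measurable G)
    (hGrange : ∀ ω, G ω = ⊤ ∨ (1 ≤ G ω ∧ G ω ≤ (T : ℕ∞)))
    (Ss : Set Ω) (hSs : MeasurableSet Ss)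
    (Ys Ys' Y : ℕ → ℕ∞ → Ω → ℝ)
    (hY : ∀ τ γ ω, Y τ γ ω = if ω ∈ Ss then Ys τ γ ω else Ys' τ γ ω)
    (hIntYs : ∀ τ γ, Integrable (Ys τ γ) μ)
    (hIntYs' : ∀ τ γ, Integrable (Ys' τ γ) μ)
    (Yobs : ℕ → Ω → ℝ)
    (hYobs : ∀ τ ω, Yobs τ ω = if G ω ≤ (τ : ℕ∞) then Y τ (G ω) ω else Y τ ⊤ ω)
    (hIntYobs : ∀ τ, Integrable (Yobs τ) μ)
    (g t : ℕ) (hg1 : 1 ≤ g) (hgt : g ≤ t) (htT : t ≤ T)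
    -- covariate σ-algebra and comparison event
    (𝒳 : MeasurableSpace Ω) (h𝒳 : 𝒳 ≤ m0)
    (C : Set Ω) (hC : C = {ω | G ω = ⊤})
    -- group-subgroup events
    (Egs Egs' Ecs Ecs' : Set Ω)
    (hEgs : Egs = {ω | G ω = (g : ℕ∞)} ∩ Ss)
    (hEgs' : Egs' = {ω | G ω = (g : ℕ∞)} ∩ Ssᶜ)
    (hEcs : Ecs = C ∩ Ss) (hEcs' : Ecs' = C ∩ Ssᶜ)
    -- propensity scores: versions of the conditional expectations of indicators
    (πgs πgs' πcs πcs' : Ω → ℝ)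
    (hπgs_meas : StronglyMeasurable[𝒳] πgs)
    (hπgs : πgs =ᵐ[μ] μ[Egs.indicator (fun _ => (1 : ℝ)) | 𝒳])
    (hπgs'_meas : StronglyMeasurable[𝒳] πgs')
    (hπgs' : πgs' =ᵐ[μ] μ[Egs'.indicator (fun _ => (1 : ℝ)) | 𝒳])
    (hπcs_meas : StronglyMeasurable[𝒳] πcs)
    (hπcs : πcs =ᵐ[μ] μ[Ecs.indicator (fun _ => (1 : ℝ)) | 𝒳])
    (hπcs'_meas : StronglyMeasurable[𝒳] πcs')
    (hπcs' : πcs' =ᵐ[μ] μ[Ecs'.indicator (fun _ => (1 : ℝ)) | 𝒳])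
    -- overlap (Assumption 9)
    (ε : ℝ) (hε : 0 < ε)
    (p : ℝ) (hp : p = (μ Egs).toReal) (hpε : ε < p)
    (hπgs'_bd : ∀ᵐ ω ∂μ, ε ≤ πgs' ω)
    (hπcs_bd : ∀ᵐ ω ∂μ, ε ≤ πcs ω)
    (hπcs'_bd : ∀ᵐ ω ∂μ, ε ≤ πcs' ω)
    -- observed change and counterfactual untreated changes
    (ΔY Δs Δs' : Ω → ℝ)
    (hΔY : ΔY = fun ω => Yobs t ω - Yobs (g - 1) ω)
    (hΔs : Δs = fun ω => Ys t ⊤ ω - Ys (g - 1) ⊤ ω)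
    (hΔs' : Δs' = fun ω => Ys' t ⊤ ω - Ys' (g - 1) ⊤ ω)
    -- (a) conditional no subgroup selection
    (ha : (fun ω => (μ[Egs.indicator (fun ω' => Ys' t (g : ℕ∞) ω' - Ys' t ⊤ ω') | 𝒳]) ω * πgs' ω)
        =ᵐ[μ] fun ω => (μ[Egs'.indicator (fun ω' => Ys' t (g : ℕ∞) ω' - Ys' t ⊤ ω') | 𝒳]) ω * πgs ω)
    -- (b) conditional parallel trends within each subgroup
    (hb_s : (fun ω => (μ[Egs.indicator Δs | 𝒳]) ω * πcs ω)
        =ᵐ[μ] fun ω => (μ[Ecs.indicator Δs | 𝒳]) ω * πgs ω)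
    (hb_s' : (fun ω => (μ[Egs'.indicator Δs' | 𝒳]) ω * πcs' ω)
        =ᵐ[μ] fun ω => (μ[Ecs'.indicator Δs' | 𝒳]) ω * πgs' ω)
    -- (c) conditional parallel gaps across subgroups for the s'-counterfactual change
    (hc_g : (fun ω => (μ[Egs.indicator Δs' | 𝒳]) ω * πgs' ω)
        =ᵐ[μ] fun ω => (μ[Egs'.indicator Δs' | 𝒳]) ω * πgs ω)
    (hc_c : (fun ω => (μ[Ecs.indicator Δs' | 𝒳]) ω * πcs' ω)
        =ᵐ[μ] fun ω => (μ[Ecs'.indicator Δs' | 𝒳]) ω * πcs ω)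
    -- weights
    (w₁ w₂ w₃ w₄ : Ω → ℝ)
    (hw₁ : w₁ = fun ω => Egs.indicator (fun _ => (1 : ℝ)) ω / p)
    (hw₂ : w₂ = fun ω => (Egs'.indicator (fun _ => (1 : ℝ)) ω * πgs ω / πgs' ω)
        / ∫ ω', Egs'.indicator (fun _ => (1 : ℝ)) ω' * πgs ω' / πgs' ω' ∂μ)
    (hw₃ : w₃ = fun ω => (Ecs.indicator (fun _ => (1 : ℝ)) ω * πgs ω / πcs ω)
        / ∫ ω', Ecs.indicator (fun _ => (1 : ℝ)) ω' * πgs ω' / πcs ω' ∂μ)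
    (hw₄ : w₄ = fun ω => (Ecs'.indicator (fun _ => (1 : ℝ)) ω * πgs ω / πcs' ω)
        / ∫ ω', Ecs'.indicator (fun _ => (1 : ℝ)) ω' * πgs ω' / πcs' ω' ∂μ) :
    -- IPW estimand = CDATT(g,t)
    (∫ ω, (w₁ ω - w₂ ω) * ΔY ω ∂μ)
      - (∫ ω, (w₃ ω - w₄ ω) * ΔY ω ∂μ)
    = (∫ ω, (Ys t (g : ℕ∞) ω - Ys t ⊤ ω) ∂(μ[|Egs]))
      - (∫ ω, (Ys' t (g : ℕ∞) ω - Ys' t ⊤ ω) ∂(μ[|Egs])) := by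
    classical
  letI : MeasurableSpace Ω := m0
  -- measurability of events
  have hGg : MeasurableSet[m0] {ω | G ω = (g : ℕ∞)} := hGmeas (measurableSet_singleton _)
  have hGtop : MeasurableSet[m0] {ω | G ω = (⊤ : ℕ∞)} := hGmeas (measurableSet_singleton _)
  have hmEgs : MeasurableSet[m0] Egs := by rw [hEgs]; exact hGg.inter hSs
  have hmEgs' : MeasurableSet[m0] Egs' := by rw [hEgs']; exact hGg.inter hSs.compl
  have hmEcs : MeasurableSet[m0] Ecs := by rw [hEcs, hC]; exact hGtop.inter hSs
  have hmEcs' : MeasurableSet[m0] Ecs' := by rw [hEcs', hC]; exact hGtop.inter hSs.compl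
  have hεp : (0:ℝ) < p := hε.trans hpε
  -- pointwise description of the observed change on each event
  have hgle : ((g:ℕ∞) ≤ (t:ℕ∞)) := by exact_mod_cast hgt
  have hgnle : ¬ ((g:ℕ∞) ≤ ((g-1 : ℕ):ℕ∞)) := by
    rw [Nat.cast_le]; omega
  have htople : ∀ τ : ℕ, ¬ ((⊤:ℕ∞) ≤ (τ:ℕ∞)) := by
    intro τ h
    exact (ENat.coe_ne_top τ) (top_le_iff.mp h)
  have hΔgs : ∀ ω ∈ Egs, ΔY ω = Ys t (g:ℕ∞) ω - Ys (g-1) ⊤ ω := by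
    intro ω hω
    rw [hEgs] at hω
    obtain ⟨hωG, hωS⟩ := hω
    simp only [Set.mem_setOf_eq] at hωG
    have h1 : Yobs t ω = Ys t (g:ℕ∞) ω := by
      rw [hYobs, hωG, if_pos hgle, hY, if_pos hωS]
    have h2 : Yobs (g-1) ω = Ys (g-1) ⊤ ω := by
      rw [hYobs, hωG, if_neg hgnle, hY, if_pos hωS]
    simp [hΔY, h1, h2]
  have hΔgs' : ∀ ω ∈ Egs', ΔY ω = Ys' t (g:ℕ∞) ω - Ys' (g-1) ⊤ ω := by
    intro ω hω
    rw [hEgs'] at hω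
    obtain ⟨hωG, hωS⟩ := hω
    simp only [Set.mem_setOf_eq] at hωG
    simp only [Set.mem_compl_iff] at hωS
    have h1 : Yobs t ω = Ys' t (g:ℕ∞) ω := by
      rw [hYobs, hωG, if_pos hgle, hY, if_neg hωS]
    have h2 : Yobs (g-1) ω = Ys' (g-1) ⊤ ω := by
      rw [hYobs, hωG, if_neg hgnle, hY, if_neg hωS]
    simp [hΔY, h1, h2]
  have hΔcs : ∀ ω ∈ Ecs, ΔY ω = Δs ω := by
    intro ω hω
    rw [hEcs, hC] at hω
    obtain ⟨hωG, hωS⟩ := hω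
    simp only [Set.mem_setOf_eq] at hωG
    have h1 : Yobs t ω = Ys t ⊤ ω := by
      rw [hYobs, hωG, if_neg (htople t), hY, if_pos hωS]
    have h2 : Yobs (g-1) ω = Ys (g-1) ⊤ ω := by
      rw [hYobs, hωG, if_neg (htople (g-1)), hY, if_pos hωS]
    simp [hΔY, hΔs, h1, h2]
  have hΔcs' : ∀ ω ∈ Ecs', ΔY ω = Δs' ω := by
    intro ω hω
    rw [hEcs', hC] at hω
    obtain ⟨hωG, hωS⟩ := hω
    simp only [Set.mem_setOf_eq] at hωG
    simp only [Set.mem_compl_iff] at hωS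
    have h1 : Yobs t ω = Ys' t ⊤ ω := by
      rw [hYobs, hωG, if_neg (htople t), hY, if_neg hωS]
    have h2 : Yobs (g-1) ω = Ys' (g-1) ⊤ ω := by
      rw [hYobs, hωG, if_neg (htople (g-1)), hY, if_neg hωS]
    simp [hΔY, hΔs', h1, h2]
  -- integrability
  have hΔYint : Integrable ΔY μ := by
    rw [hΔY]; exact (hIntYobs t).sub (hIntYobs (g-1))
  have hΔsint : Integrable Δs μ := by
    rw [hΔs]; exact (hIntYs t ⊤).sub (hIntYs (g-1) ⊤)
  have hΔs'int : Integrable Δs' μ := by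
    rw [hΔs']; exact (hIntYs' t ⊤).sub (hIntYs' (g-1) ⊤)
  have hf1int : Integrable (fun ω' => Ys t (g:ℕ∞) ω' - Ys t ⊤ ω') μ :=
    (hIntYs t _).sub (hIntYs t ⊤)
  have hf2int : Integrable (fun ω' => Ys' t (g:ℕ∞) ω' - Ys' t ⊤ ω') μ :=
    (hIntYs' t _).sub (hIntYs' t ⊤)
  -- bounds on πgs
  have hπgs01 : ∀ᵐ ω ∂μ, 0 ≤ πgs ω ∧ πgs ω ≤ 1 := by
    have h0 : 0 ≤ᵐ[μ] μ[Egs.indicator (fun _ => (1:ℝ))|𝒳] :=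
      condExp_nonneg (ae_of_all _ fun ω => Set.indicator_nonneg (fun _ _ => zero_le_one) ω)
    have hle : Egs.indicator (fun _ => (1:ℝ)) ≤ fun _ => (1:ℝ) := by
      intro ω; by_cases hω : ω ∈ Egs <;> simp [hω]
    have h1 : μ[Egs.indicator (fun _ => (1:ℝ))|𝒳] ≤ᵐ[μ] μ[(fun _ => (1:ℝ))|𝒳] :=
      condExp_mono ((integrable_const (1:ℝ)).indicator hmEgs) (integrable_const (1:ℝ))
        (ae_of_all _ hle)
    rw [condExp_const h𝒳 (1:ℝ)] at h1
    filter_upwards [hπgs, h0, h1] with ω he h0ω h1ω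
    rw [he]
    exact ⟨h0ω, h1ω⟩
  have hratio_bd : ∀ {πE : Ω → ℝ}, (∀ᵐ ω ∂μ, ε ≤ πE ω) →
      ∀ᵐ ω ∂μ, |πgs ω / πE ω| ≤ 1/ε := by
    intro πE hbd
    filter_upwards [hbd, hπgs01] with ω hε' h01
    rw [abs_div, abs_of_nonneg h01.1, abs_of_nonneg (le_trans hε.le hε')]
    exact div_le_div₀ zero_le_one h01.2 hε hε'
  -- the key pull-out computation
  have key : ∀ (πE : Ω → ℝ), StronglyMeasurable[𝒳] πE → (∀ᵐ ω ∂μ, ε ≤ πE ω) →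
      ∀ (Z W : Ω → ℝ), Integrable Z μ → Integrable W μ →
      ((fun ω => πgs ω / πE ω * (μ[Z|𝒳]) ω) =ᵐ[μ] fun ω => (μ[W|𝒳]) ω) →
      ∫ ω, πgs ω / πE ω * Z ω ∂μ = ∫ ω, W ω ∂μ := by
    intro πE hm hbd Z W hZ hW hae
    haveI : SigmaFinite (μ.trim h𝒳) := by
      haveI : IsFiniteMeasure (μ.trim h𝒳) := isFiniteMeasure_trim h𝒳
      infer_instance
    have hmeas : StronglyMeasurable[𝒳] (fun ω => πgs ω / πE ω) :=
      (hπgs_meas.measurable.div hm.measurable).stronglyMeasurable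
    calc ∫ ω, πgs ω / πE ω * Z ω ∂μ
        = ∫ ω, πgs ω / πE ω * (μ[Z|𝒳]) ω ∂μ := pull_out h𝒳 hmeas (hratio_bd hbd) hZ
      _ = ∫ ω, (μ[W|𝒳]) ω ∂μ := integral_congr_ae hae
      _ = ∫ ω, W ω ∂μ := integral_condExp h𝒳
  -- denominators all equal p
  have hWp : ∫ ω, Egs.indicator (fun _ => (1:ℝ)) ω ∂μ = p := by
    rw [hp]; exact integral_indicator_one hmEgs
  have hden : ∀ (E : Set Ω) (πE : Ω → ℝ), MeasurableSet[m0] E → StronglyMeasurable[𝒳] πE →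
      (πE =ᵐ[μ] μ[E.indicator (fun _ => (1:ℝ))|𝒳]) → (∀ᵐ ω ∂μ, ε ≤ πE ω) →
      ∫ ω, E.indicator (fun _ => (1:ℝ)) ω * πgs ω / πE ω ∂μ = p := by
    intro E πE hmE hsm hver hbd
    have hae : (fun ω => πgs ω / πE ω * (μ[E.indicator (fun _ => (1:ℝ))|𝒳]) ω)
        =ᵐ[μ] fun ω => (μ[Egs.indicator (fun _ => (1:ℝ))|𝒳]) ω := by
      filter_upwards [hver, hπgs, hbd] with ω hv hg hb
      have hne : πE ω ≠ 0 := (hε.trans_le hb).ne'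
      rw [← hv, ← hg, div_mul_cancel₀ _ hne]
    have h1 : (fun ω => E.indicator (fun _ => (1:ℝ)) ω * πgs ω / πE ω)
        = fun ω => πgs ω / πE ω * E.indicator (fun _ => (1:ℝ)) ω := by
      funext ω; ring
    rw [h1, key πE hsm hbd _ _ ((integrable_const (1:ℝ)).indicator hmE)
      ((integrable_const (1:ℝ)).indicator hmEgs) hae, hWp]
  have hd2 : (∫ ω', Egs'.indicator (fun _ => (1:ℝ)) ω' * πgs ω' / πgs' ω' ∂μ) = p :=
    hden Egs' πgs' hmEgs' hπgs'_meas hπgs' hπgs'_bd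
  have hd3 : (∫ ω', Ecs.indicator (fun _ => (1:ℝ)) ω' * πgs ω' / πcs ω' ∂μ) = p :=
    hden Ecs πcs hmEcs hπcs_meas hπcs hπcs_bd
  have hd4 : (∫ ω', Ecs'.indicator (fun _ => (1:ℝ)) ω' * πgs ω' / πcs' ω' ∂μ) = p :=
    hden Ecs' πcs' hmEcs' hπcs'_meas hπcs' hπcs'_bd
  -- numerator identities
  have hN2a : ∫ ω, πgs ω / πgs' ω * (Egs'.indicator (fun ω' => Ys' t (g:ℕ∞) ω' - Ys' t ⊤ ω')) ω ∂μ
      = ∫ ω, (Egs.indicator (fun ω' => Ys' t (g:ℕ∞) ω' - Ys' t ⊤ ω')) ω ∂μ := by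
    refine key πgs' hπgs'_meas hπgs'_bd _ _ (hf2int.indicator hmEgs')
      (hf2int.indicator hmEgs) ?_
    filter_upwards [ha, hπgs'_bd] with ω hha hb
    have hne : πgs' ω ≠ 0 := (hε.trans_le hb).ne'
    rw [div_mul_eq_mul_div, div_eq_iff hne]
    linear_combination -hha
  have hN2b : ∫ ω, πgs ω / πgs' ω * (Egs'.indicator Δs') ω ∂μ
      = ∫ ω, (Egs.indicator Δs') ω ∂μ := by
    refine key πgs' hπgs'_meas hπgs'_bd _ _ (hΔs'int.indicator hmEgs')
      (hΔs'int.indicator hmEgs) ?_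
    filter_upwards [hc_g, hπgs'_bd] with ω hha hb
    have hne : πgs' ω ≠ 0 := (hε.trans_le hb).ne'
    rw [div_mul_eq_mul_div, div_eq_iff hne]
    linear_combination -hha
  have hN3 : ∫ ω, πgs ω / πcs ω * (Ecs.indicator Δs) ω ∂μ
      = ∫ ω, (Egs.indicator Δs) ω ∂μ := by
    refine key πcs hπcs_meas hπcs_bd _ _ (hΔsint.indicator hmEcs)
      (hΔsint.indicator hmEgs) ?_
    filter_upwards [hb_s, hπcs_bd] with ω hha hb
    have hne : πcs ω ≠ 0 := (hε.trans_le hb).ne'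
    rw [div_mul_eq_mul_div, div_eq_iff hne]
    linear_combination -hha
  have hN4 : ∫ ω, πgs ω / πcs' ω * (Ecs'.indicator Δs') ω ∂μ
      = ∫ ω, (Egs.indicator Δs') ω ∂μ := by
    refine key πcs' hπcs'_meas hπcs'_bd _ _ (hΔs'int.indicator hmEcs')
      (hΔs'int.indicator hmEgs) ?_
    filter_upwards [hb_s', hc_g, hπgs'_bd, hπcs'_bd] with ω hb' hcg hbg hbc
    have hneg : πgs' ω ≠ 0 := (hε.trans_le hbg).ne'
    have hnec : πcs' ω ≠ 0 := (hε.trans_le hbc).ne'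
    have h2 : πgs ω * (μ[Ecs'.indicator Δs'|𝒳]) ω
        = (μ[Egs.indicator Δs'|𝒳]) ω * πcs' ω := by
      refine mul_left_cancel₀ hneg ?_
      linear_combination (-(πgs ω)) * hb' - (πcs' ω) * hcg
    rw [div_mul_eq_mul_div, div_eq_iff hnec]
    exact h2
  -- splitting the observed change on Egs and Egs'
  have hsplit1 : Egs.indicator ΔY
      = fun ω => (Egs.indicator (fun ω' => Ys t (g:ℕ∞) ω' - Ys t ⊤ ω')) ω
          + (Egs.indicator Δs) ω := by
    funext ω
    by_cases hω : ω ∈ Egs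
    · simp only [Set.indicator_of_mem hω, hΔgs ω hω, hΔs]; ring
    · simp [Set.indicator_of_notMem hω]
  have hsplit2 : Egs'.indicator ΔY
      = fun ω => (Egs'.indicator (fun ω' => Ys' t (g:ℕ∞) ω' - Ys' t ⊤ ω')) ω
          + (Egs'.indicator Δs') ω := by
    funext ω
    by_cases hω : ω ∈ Egs'
    · simp only [Set.indicator_of_mem hω, hΔgs' ω hω, hΔs']; ring
    · simp [Set.indicator_of_notMem hω]
  have hsplit3 : Ecs.indicator ΔY = Ecs.indicator Δs := Set.indicator_congr hΔcs
  have hsplit4 : Ecs'.indicator ΔY = Ecs'.indicator Δs' := Set.indicator_congr hΔcs'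
  -- abbreviations for the four basic integrals
  set A := ∫ ω, (Egs.indicator (fun ω' => Ys t (g:ℕ∞) ω' - Ys t ⊤ ω')) ω ∂μ with hA
  set B := ∫ ω, (Egs.indicator (fun ω' => Ys' t (g:ℕ∞) ω' - Ys' t ⊤ ω')) ω ∂μ with hB
  set DS := ∫ ω, (Egs.indicator Δs) ω ∂μ with hDS
  set DS' := ∫ ω, (Egs.indicator Δs') ω ∂μ with hDS'
  -- integrals of the weighted terms
  have hmul_int : ∀ (E : Set Ω) (πE : Ω → ℝ), MeasurableSet[m0] E → StronglyMeasurable[𝒳] πE →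
      (∀ᵐ ω ∂μ, ε ≤ πE ω) → ∀ (Z : Ω → ℝ), Integrable Z μ →
      Integrable (fun ω => πgs ω / πE ω * (E.indicator Z) ω) μ := by
    intro E πE hmE hsm hbd Z hZ
    exact intble_bddmul ((((hπgs_meas.measurable.div hsm.measurable).stronglyMeasurable).mono h𝒳).aestronglyMeasurable)
      (hratio_bd hbd) (hZ.indicator hmE)
  have hT2 : ∫ ω, πgs ω / πgs' ω * (Egs'.indicator ΔY) ω ∂μ = B + DS' := by
    have h1 : (fun ω => πgs ω / πgs' ω * (Egs'.indicator ΔY) ω)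
        = fun ω => πgs ω / πgs' ω * (Egs'.indicator (fun ω' => Ys' t (g:ℕ∞) ω' - Ys' t ⊤ ω')) ω
          + πgs ω / πgs' ω * (Egs'.indicator Δs') ω := by
      funext ω; rw [hsplit2]; ring
    rw [h1, integral_add (hmul_int _ _ hmEgs' hπgs'_meas hπgs'_bd _ hf2int)
      (hmul_int _ _ hmEgs' hπgs'_meas hπgs'_bd _ hΔs'int), hN2a, hN2b]
  have hT1 : ∫ ω, (Egs.indicator ΔY) ω ∂μ = A + DS := by
    rw [hsplit1]
    exact integral_add (hf1int.indicator hmEgs) (hΔsint.indicator hmEgs)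
  have hT3 : ∫ ω, πgs ω / πcs ω * (Ecs.indicator ΔY) ω ∂μ = DS := by
    rw [hsplit3]; exact hN3
  have hT4 : ∫ ω, πgs ω / πcs' ω * (Ecs'.indicator ΔY) ω ∂μ = DS' := by
    rw [hsplit4]; exact hN4
  -- left-hand side integrals
  have hL1 : ∫ ω, (w₁ ω - w₂ ω) * ΔY ω ∂μ = p⁻¹ * (A + DS) - p⁻¹ * (B + DS') := by
    have h1 : (fun ω => (w₁ ω - w₂ ω) * ΔY ω)
        = fun ω => p⁻¹ * (Egs.indicator ΔY) ω
          - p⁻¹ * (πgs ω / πgs' ω * (Egs'.indicator ΔY) ω) := by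
      funext ω
      rw [hw₁, hw₂, hd2]
      by_cases h1 : ω ∈ Egs <;> by_cases h2 : ω ∈ Egs' <;>
        simp only [Set.indicator_of_mem, Set.indicator_of_notMem, h1, h2,
          not_false_iff] <;> ring
    rw [h1, integral_sub ((hΔYint.indicator hmEgs).const_mul _)
      ((hmul_int _ _ hmEgs' hπgs'_meas hπgs'_bd _ hΔYint).const_mul _),
      integral_const_mul, integral_const_mul, hT1, hT2]
  have hL2 : ∫ ω, (w₃ ω - w₄ ω) * ΔY ω ∂μ = p⁻¹ * DS - p⁻¹ * DS' := by
    have h1 : (fun ω => (w₃ ω - w₄ ω) * ΔY ω)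
        = fun ω => p⁻¹ * (πgs ω / πcs ω * (Ecs.indicator ΔY) ω)
          - p⁻¹ * (πgs ω / πcs' ω * (Ecs'.indicator ΔY) ω) := by
      funext ω
      rw [hw₃, hw₄, hd3, hd4]
      by_cases h1 : ω ∈ Ecs <;> by_cases h2 : ω ∈ Ecs' <;>
        simp only [Set.indicator_of_mem, Set.indicator_of_notMem, h1, h2,
          not_false_iff] <;> ring
    rw [h1, integral_sub ((hmul_int _ _ hmEcs hπcs_meas hπcs_bd _ hΔYint).const_mul _)
      ((hmul_int _ _ hmEcs' hπcs'_meas hπcs'_bd _ hΔYint).const_mul _),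
      integral_const_mul, integral_const_mul, hT3, hT4]
  -- right-hand side conditional expectations
  have hR1 : ∫ ω, (Ys t (g:ℕ∞) ω - Ys t ⊤ ω) ∂(μ[|Egs]) = p⁻¹ * A := by
    rw [ProbabilityTheory.cond, integral_smul_measure, ← integral_indicator hmEgs,
      ENNReal.toReal_inv, ← hp, smul_eq_mul, hA]
  have hR2 : ∫ ω, (Ys' t (g:ℕ∞) ω - Ys' t ⊤ ω) ∂(μ[|Egs]) = p⁻¹ * B := by
    rw [ProbabilityTheory.cond, integral_smul_measure, ← integral_indicator hmEgs,
      ENNReal.toReal_inv, ← hp, smul_eq_mul, hB]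
  rw [hL1, hL2, hR1, hR2]
  ring
end

section
/- Proposition 3, doubly-robust identification (never-treated comparison): Under the overlap condition and the conditional identification conditions (a), (b), (c) with comparison event C = {G = ∞}, and given 𝒳-measurable integrable outcome functions μ^{s'}_{g} and μ^{s'}_{c} satisfying, almost surely, μ^{s'}_{g}·π_{g,s'} = E[1_{G=g}1_{S_{s'}}·ΔY | 𝒳] and μ^{s'}_{c}·π_{c,s'} = E[1_C 1_{S_{s'}}·ΔY | 𝒳], the doubly-robust estimand identifies the causal difference in ATTs: E[(w₁ − w₂)·(ΔY − μ^{s'}_{g})] − E[(w₃ − w₄)·(ΔY − μ^{s'}_{c})] = CDATT(g,t), where ΔY = Y_t − Y_{g−1} is the observed change in outcomes and the weights are w₁ = 1_{G=g}1_{S_s}/p, w₂ = (1_{G=g}1_{S_{s'}}·π_{g,s}/π_{g,s'}) / E[1_{G=g}1_{S_{s'}}·π_{g,s}/π_{g,s'}], w₃ = (1_C 1_{S_s}·π_{g,s}/π_{c,s}) / E[1_C 1_{S_s}·π_{g,s}/π_{c,s}], and w₄ = (1_C 1_{S_{s'}}·π_{g,s}/π_{c,s'}) / E[1_C 1_{S_{s'}}·π_{g,s}/π_{c,s'}].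 -/
/-!
The augmentation terms carried by `w₂` and `w₄` have mean zero: conditionally on `𝒳` the
outcome models satisfy `μ · π = E[1_E ΔY | 𝒳]` on their cells, and overlap keeps the
`𝒳`-measurable weights bounded. Reweighting the comparison cell `{G = ∞} ∩ S_s` by
`π_{g,s} / π_{c,s}` moves the comparison term, through conditional parallel trends in `s`,
onto the untreated trend of cohort `g` in `s`, so the `s`-part of the estimand is the ATT in `s`.
What remains is `E[1_{G=g, S_s} (μ^{s'}_g − μ^{s'}_c)] / p`, and parallel trends in `s'`,
parallel gaps and no subgroup selection identify `(μ^{s'}_g − μ^{s'}_c) · π_{g,s}` with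
`E[1_{G=g, S_s} (Y_t(g;s') − Y_t(∞;s')) | 𝒳]`.
-/

open MeasureTheory ProbabilityTheory
open scoped Classical

structure IsPropensity {Ω : Type*} (m : MeasurableSpace Ω) {m0 : MeasurableSpace Ω}
    (μ : Measure[m0] Ω) (E : Set Ω) (π : Ω → ℝ) : Prop where
  stronglyMeasurable : StronglyMeasurable[m] π
  ae_eq_condExp : π =ᵐ[μ] μ[E.indicator (fun _ => (1 : ℝ)) | m]

section Propensity

variable {Ω : Type*} {m m0 : MeasurableSpace Ω} {μ : Measure Ω}
  {E E' : Set Ω} {f f' h π π' : Ω → ℝ} {ε : ℝ}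

theorem indicator_one_mul (E : Set Ω) (f : Ω → ℝ) :
    (fun ω => E.indicator (fun _ => (1 : ℝ)) ω * f ω) = E.indicator f := by
  ext ω; by_cases hω : ω ∈ E <;> simp [hω]

theorem indicator_one_mul_div_mul (E : Set Ω) (a b f : Ω → ℝ) :
    (fun ω => E.indicator (fun _ => (1 : ℝ)) ω * a ω / b ω * f ω)
      = fun ω => a ω / b ω * E.indicator f ω := by
  ext ω; by_cases hω : ω ∈ E <;> simp [hω]

theorem condExp_indicator_of_stronglyMeasurable [IsFiniteMeasure μ] (hE : MeasurableSet E)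
    (hh : StronglyMeasurable[m] h) (hh_int : Integrable h μ) :
    μ[E.indicator h | m] =ᵐ[μ] fun ω => h ω * μ[E.indicator (fun _ => (1 : ℝ)) | m] ω := by
  have hind : E.indicator h = h * E.indicator (fun _ => (1 : ℝ)) := by
    rw [← indicator_one_mul]; ext ω; exact mul_comm _ _
  rw [hind]
  refine condExp_mul_of_stronglyMeasurable_left hh ?_ ((integrable_const 1).indicator hE)
  rw [← hind]
  exact hh_int.indicator hE

theorem condExp_indicator_sub_of_stronglyMeasurable [IsFiniteMeasure μ] (hE : MeasurableSet E)
    (hf : Integrable f μ) (hh : StronglyMeasurable[m] h) (hh_int : Integrable h μ) :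
    μ[E.indicator (fun ω => f ω - h ω) | m] =ᵐ[μ]
      fun ω => μ[E.indicator f | m] ω - h ω * μ[E.indicator (fun _ => (1 : ℝ)) | m] ω := by
  rw [show E.indicator (fun ω => f ω - h ω) = E.indicator f - E.indicator h from
    Set.indicator_sub' E f h]
  filter_upwards [condExp_sub (hf.indicator hE) (hh_int.indicator hE) m,
    condExp_indicator_of_stronglyMeasurable hE hh hh_int] with ω hω hhω
  rw [hω, Pi.sub_apply, hhω]

theorem condExp_balance_sub_of_stronglyMeasurable [IsFiniteMeasure μ]
    (hE : MeasurableSet E) (hE' : MeasurableSet E') (hf : Integrable f μ) (hf' : Integrable f' μ)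
    (hh : StronglyMeasurable[m] h) (hh_int : Integrable h μ)
    (hπ : π =ᵐ[μ] μ[E.indicator (fun _ => (1 : ℝ)) | m])
    (hπ' : π' =ᵐ[μ] μ[E'.indicator (fun _ => (1 : ℝ)) | m])
    (hbal : (fun ω => μ[E'.indicator f' | m] ω * π ω) =ᵐ[μ]
      fun ω => μ[E.indicator f | m] ω * π' ω) :
    (fun ω => μ[E'.indicator (fun ω => f' ω - h ω) | m] ω * π ω) =ᵐ[μ]
      fun ω => μ[E.indicator (fun ω => f ω - h ω) | m] ω * π' ω := by
  filter_upwards [condExp_indicator_sub_of_stronglyMeasurable hE hf hh hh_int,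
    condExp_indicator_sub_of_stronglyMeasurable hE' hf' hh hh_int, hπ, hπ', hbal]
    with ω hω hω' hπω hπ'ω hbω
  rw [hω, hω', ← hπω, ← hπ'ω]
  linear_combination hbω

theorem ae_abs_div_le_inv_of_condExp_indicator
    (hπ' : π' =ᵐ[μ] μ[E'.indicator (fun _ => (1 : ℝ)) | m])
    (hε : 0 < ε) (hπ_bd : ∀ᵐ ω ∂μ, ε ≤ π ω) : ∀ᵐ ω ∂μ, |π' ω / π ω| ≤ ε⁻¹ := by
  have hle : ∀ᵐ ω ∂μ, |μ[E'.indicator (fun _ => (1 : ℝ)) | m] ω| ≤ 1 :=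
    ae_bdd_abs_condExp_of_ae_bdd_abs (.of_forall fun ω => by
      by_cases hω : ω ∈ E' <;> simp [hω])
  filter_upwards [hπ', hle, hπ_bd] with ω h1 h2 h3
  rw [abs_div, abs_of_pos (hε.trans_le h3), h1, div_le_iff₀ (hε.trans_le h3)]
  calc _ ≤ (1 : ℝ) := h2
    _ ≤ ε⁻¹ * π ω := by rw [← inv_mul_cancel₀ hε.ne']; gcongr

theorem integrable_indicator_one_mul_div_mul (hm : m ≤ m0) (hE : MeasurableSet E)
    (hπ' : IsPropensity m μ E' π') (hπ : StronglyMeasurable[m] π) (hε : 0 < ε)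
    (hπ_bd : ∀ᵐ ω ∂μ, ε ≤ π ω) (hf : Integrable f μ) :
    Integrable (fun ω => E.indicator (fun _ => (1 : ℝ)) ω * π' ω / π ω * f ω) μ := by
  rw [indicator_one_mul_div_mul]
  exact (hf.indicator hE).bdd_mul ((hπ'.stronglyMeasurable.div hπ).mono hm).aestronglyMeasurable
    ((ae_abs_div_le_inv_of_condExp_indicator hπ'.ae_eq_condExp hε hπ_bd).mono fun ω hω => by
      rwa [Real.norm_eq_abs])

theorem integral_indicator_one_mul_div_mul [IsFiniteMeasure μ] (hm : m ≤ m0)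
    (hE : MeasurableSet E) (hπ' : IsPropensity m μ E' π') (hπ : StronglyMeasurable[m] π)
    (hε : 0 < ε) (hπ_bd : ∀ᵐ ω ∂μ, ε ≤ π ω) (hf : Integrable f μ) :
    ∫ ω, E.indicator (fun _ => (1 : ℝ)) ω * π' ω / π ω * f ω ∂μ
      = ∫ ω, π' ω / π ω * μ[E.indicator f | m] ω ∂μ := by
  have hint := integrable_indicator_one_mul_div_mul hm hE hπ' hπ hε hπ_bd hf
  rw [indicator_one_mul_div_mul] at hint ⊢
  rw [← integral_condExp hm]
  exact integral_congr_ae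
    (condExp_mul_of_stronglyMeasurable_left (hπ'.stronglyMeasurable.div hπ) hint (hf.indicator hE))

theorem integral_indicator_one_mul_div_mul_eq_of_balance [IsFiniteMeasure μ] (hm : m ≤ m0)
    (hE : MeasurableSet E) (hπ' : IsPropensity m μ E' π') (hπ : StronglyMeasurable[m] π)
    (hε : 0 < ε) (hπ_bd : ∀ᵐ ω ∂μ, ε ≤ π ω) (hf : Integrable f μ)
    (hbal : (fun ω => μ[E'.indicator f' | m] ω * π ω) =ᵐ[μ]
      fun ω => μ[E.indicator f | m] ω * π' ω) :
    ∫ ω, E.indicator (fun _ => (1 : ℝ)) ω * π' ω / π ω * f ω ∂μ = ∫ ω, E'.indicator f' ω ∂μ := by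
  rw [integral_indicator_one_mul_div_mul hm hE hπ' hπ hε hπ_bd hf,
    ← integral_condExp hm (f := E'.indicator f')]
  refine integral_congr_ae ?_
  filter_upwards [hbal, hπ_bd] with ω hω hπω
  rw [div_mul_eq_mul_div, div_eq_iff (hε.trans_le hπω).ne', mul_comm, hω]

theorem integral_indicator_one_mul_div [IsFiniteMeasure μ] (hm : m ≤ m0)
    (hE : MeasurableSet E) (hE' : MeasurableSet E') (hπ' : IsPropensity m μ E' π')
    (hπ : IsPropensity m μ E π) (hε : 0 < ε) (hπ_bd : ∀ᵐ ω ∂μ, ε ≤ π ω) :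
    ∫ ω, E.indicator (fun _ => (1 : ℝ)) ω * π' ω / π ω ∂μ = μ.real E' := by
  have hbal : (fun ω => μ[E'.indicator (fun _ => (1 : ℝ)) | m] ω * π ω) =ᵐ[μ]
      fun ω => μ[E.indicator (fun _ => (1 : ℝ)) | m] ω * π' ω := by
    filter_upwards [hπ'.ae_eq_condExp, hπ.ae_eq_condExp] with ω h' h
    rw [← h', ← h, mul_comm]
  have h := integral_indicator_one_mul_div_mul_eq_of_balance hm hE hπ' hπ.stronglyMeasurable hε
    hπ_bd (integrable_const 1) hbal
  simp only [mul_one] at h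
  rw [h, integral_indicator hE', setIntegral_const, smul_eq_mul, mul_one]

theorem integral_indicator_one_mul_div_mul_sub_eq_zero [IsFiniteMeasure μ] (hm : m ≤ m0)
    (hE : MeasurableSet E) (hπ' : IsPropensity m μ E' π') (hπ : IsPropensity m μ E π)
    (hε : 0 < ε) (hπ_bd : ∀ᵐ ω ∂μ, ε ≤ π ω) (hf : Integrable f μ)
    (hh : StronglyMeasurable[m] h) (hh_int : Integrable h μ)
    (hmodel : (fun ω => h ω * π ω) =ᵐ[μ] μ[E.indicator f | m]) :
    ∫ ω, E.indicator (fun _ => (1 : ℝ)) ω * π' ω / π ω * (f ω - h ω) ∂μ = 0 := by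
  rw [integral_indicator_one_mul_div_mul (f := fun ω => f ω - h ω) hm hE hπ' hπ.stronglyMeasurable
    hε hπ_bd (hf.sub hh_int)]
  refine integral_eq_zero_of_ae ?_
  filter_upwards [condExp_indicator_sub_of_stronglyMeasurable hE hf hh hh_int, hπ.ae_eq_condExp,
    hmodel] with ω hω hπω hmω
  rw [Pi.zero_apply, hω, ← hπω, ← hmω, sub_self, mul_zero]

theorem integral_sub_augmentation_mul_sub [IsFiniteMeasure μ] {a w w' : Ω → ℝ} {D D' : ℝ}
    (hm : m ≤ m0) (hE : MeasurableSet E) (hπ' : IsPropensity m μ E' π')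
    (hπ : IsPropensity m μ E π) (hε : 0 < ε) (hπ_bd : ∀ᵐ ω ∂μ, ε ≤ π ω) (hf : Integrable f μ)
    (hh : StronglyMeasurable[m] h) (hh_int : Integrable h μ)
    (hmodel : (fun ω => h ω * π ω) =ᵐ[μ] μ[E.indicator f | m])
    (ha : Integrable (fun ω => a ω * (f ω - h ω)) μ) (hw : w = fun ω => a ω / D)
    (hw' : w' = fun ω => E.indicator (fun _ => (1 : ℝ)) ω * π' ω / π ω / D') :
    ∫ ω, (w ω - w' ω) * (f ω - h ω) ∂μ = D⁻¹ * ∫ ω, a ω * (f ω - h ω) ∂μ := by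
  have hscale : ∀ (b : Ω → ℝ) (c : ℝ),
      (fun ω => b ω / c * (f ω - h ω)) = fun ω => c⁻¹ * (b ω * (f ω - h ω)) := by
    intro b c; ext ω; ring
  subst hw hw'
  simp only [sub_mul]
  rw [integral_sub, hscale, hscale, integral_const_mul, integral_const_mul,
    integral_indicator_one_mul_div_mul_sub_eq_zero hm hE hπ' hπ hε hπ_bd hf hh hh_int hmodel,
    mul_zero, sub_zero]
  · rw [hscale]; exact ha.const_mul _
  · rw [hscale]
    exact (integrable_indicator_one_mul_div_mul hm hE hπ' hπ.stronglyMeasurable hε hπ_bd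
      (hf.sub hh_int)).const_mul _

theorem integral_sub_augmentation_mul_sub_of_indicator [IsFiniteMeasure μ] {E₀ : Set Ω}
    {w w' : Ω → ℝ} {D D' : ℝ} (hm : m ≤ m0) (hE₀ : MeasurableSet E₀) (hE : MeasurableSet E)
    (hπ' : IsPropensity m μ E' π') (hπ : IsPropensity m μ E π) (hε : 0 < ε)
    (hπ_bd : ∀ᵐ ω ∂μ, ε ≤ π ω) (hf : Integrable f μ) (hh : StronglyMeasurable[m] h)
    (hh_int : Integrable h μ) (hmodel : (fun ω => h ω * π ω) =ᵐ[μ] μ[E.indicator f | m])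
    (hw : w = fun ω => E₀.indicator (fun _ => (1 : ℝ)) ω / D)
    (hw' : w' = fun ω => E.indicator (fun _ => (1 : ℝ)) ω * π' ω / π ω / D') :
    ∫ ω, (w ω - w' ω) * (f ω - h ω) ∂μ = D⁻¹ * ∫ ω, E₀.indicator (fun ω => f ω - h ω) ω ∂μ := by
  have hres : Integrable (fun ω => E₀.indicator (fun _ => (1 : ℝ)) ω * (f ω - h ω)) μ := by
    rw [indicator_one_mul]
    exact (hf.sub hh_int).indicator hE₀
  rw [integral_sub_augmentation_mul_sub hm hE hπ' hπ hε hπ_bd hf hh hh_int hmodel hres hw hw',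
    indicator_one_mul]

theorem integral_sub_augmentation_mul_sub_of_balance [IsFiniteMeasure μ] {E₀ : Set Ω}
    {π₀ w w' : Ω → ℝ} {D' : ℝ} (hm : m ≤ m0) (hE₀ : MeasurableSet E₀) (hE : MeasurableSet E)
    (hE' : MeasurableSet E') (hπ' : IsPropensity m μ E' π') (hπ₀ : IsPropensity m μ E₀ π₀)
    (hπ : IsPropensity m μ E π) (hε : 0 < ε) (hπ₀_bd : ∀ᵐ ω ∂μ, ε ≤ π₀ ω)
    (hπ_bd : ∀ᵐ ω ∂μ, ε ≤ π ω) (hf : Integrable f μ) (hf' : Integrable f' μ)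
    (hh : StronglyMeasurable[m] h) (hh_int : Integrable h μ)
    (hmodel : (fun ω => h ω * π ω) =ᵐ[μ] μ[E.indicator f | m])
    (hbal : (fun ω => μ[E'.indicator f' | m] ω * π₀ ω) =ᵐ[μ]
      fun ω => μ[E₀.indicator f | m] ω * π' ω)
    (hw : w = fun ω => E₀.indicator (fun _ => (1 : ℝ)) ω * π' ω / π₀ ω
      / ∫ ω', E₀.indicator (fun _ => (1 : ℝ)) ω' * π' ω' / π₀ ω' ∂μ)
    (hw' : w' = fun ω => E.indicator (fun _ => (1 : ℝ)) ω * π' ω / π ω / D') :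
    ∫ ω, (w ω - w' ω) * (f ω - h ω) ∂μ
      = (μ.real E')⁻¹ * ∫ ω, E'.indicator (fun ω => f' ω - h ω) ω ∂μ := by
  rw [integral_sub_augmentation_mul_sub hm hE hπ' hπ hε hπ_bd hf hh hh_int hmodel
      (integrable_indicator_one_mul_div_mul hm hE₀ hπ' hπ₀.stronglyMeasurable hε hπ₀_bd
        (hf.sub hh_int)) hw hw',
    integral_indicator_one_mul_div hm hE₀ hE' hπ' hπ₀ hε hπ₀_bd,
    integral_indicator_one_mul_div_mul_eq_of_balance (f := fun ω => f ω - h ω) hm hE₀ hπ'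
      hπ₀.stronglyMeasurable hε hπ₀_bd (hf.sub hh_int)
      (condExp_balance_sub_of_stronglyMeasurable hE₀ hE' hf hf' hh hh_int hπ₀.ae_eq_condExp
        hπ'.ae_eq_condExp hbal)]

theorem integral_cond_eq_inv_mul_integral_indicator (hE : MeasurableSet E) (f : Ω → ℝ) :
    ∫ ω, f ω ∂μ[|E] = (μ E).toReal⁻¹ * ∫ ω, E.indicator f ω ∂μ := by
  rw [ProbabilityTheory.cond, integral_smul_measure, integral_indicator hE, smul_eq_mul,
    ENNReal.toReal_inv]

end Propensity

section Identification

variable {Ω : Type*} {m m0 : MeasurableSpace Ω} {μ : Measure Ω}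
  {Eg Eg' Ec' : Set Ω} {πg πg' πc' μg μc ΔY A B Δ : Ω → ℝ} {ε : ℝ}

theorem condExp_indicator_eq_model_mul_of_parallel (hε : 0 < ε)
    (hπg' : ∀ᵐ ω ∂μ, ε ≤ πg' ω) (hπc' : ∀ᵐ ω ∂μ, ε ≤ πc' ω)
    (hobs : Ec'.indicator ΔY = Ec'.indicator Δ)
    (hμc : (fun ω => μc ω * πc' ω) =ᵐ[μ] μ[Ec'.indicator ΔY | m])
    (htrends : (fun ω => μ[Eg'.indicator Δ | m] ω * πc' ω)
      =ᵐ[μ] fun ω => μ[Ec'.indicator Δ | m] ω * πg' ω)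
    (hgaps : (fun ω => μ[Eg.indicator Δ | m] ω * πg' ω)
      =ᵐ[μ] fun ω => μ[Eg'.indicator Δ | m] ω * πg ω) :
    μ[Eg.indicator Δ | m] =ᵐ[μ] fun ω => μc ω * πg ω := by
  rw [hobs] at hμc
  filter_upwards [hπg', hπc', hμc, htrends, hgaps] with ω hg' hc' hμω htω hgω
  have hEg' : μ[Eg'.indicator Δ | m] ω = μc ω * πg' ω :=
    mul_right_cancel₀ (hε.trans_le hc').ne' (by rw [htω, ← hμω]; ring)
  exact mul_right_cancel₀ (hε.trans_le hg').ne' (by rw [hgω, hEg']; ring)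

theorem model_sub_mul_eq_condExp_indicator_of_no_selection
    (hEg' : MeasurableSet Eg') (hA : Integrable A μ) (hΔ : Integrable Δ μ) (hε : 0 < ε)
    (hπg' : ∀ᵐ ω ∂μ, ε ≤ πg' ω)
    (hobs : Eg'.indicator ΔY = Eg'.indicator (A + Δ))
    (hμg : (fun ω => μg ω * πg' ω) =ᵐ[μ] μ[Eg'.indicator ΔY | m])
    (hselection : (fun ω => μ[Eg.indicator A | m] ω * πg' ω)
      =ᵐ[μ] fun ω => μ[Eg'.indicator A | m] ω * πg ω)
    (hgaps : (fun ω => μ[Eg.indicator Δ | m] ω * πg' ω)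
      =ᵐ[μ] fun ω => μ[Eg'.indicator Δ | m] ω * πg ω)
    (hΔ_model : μ[Eg.indicator Δ | m] =ᵐ[μ] fun ω => μc ω * πg ω) :
    (fun ω => (μg ω - μc ω) * πg ω) =ᵐ[μ] μ[Eg.indicator A | m] := by
  rw [hobs, Set.indicator_add'] at hμg
  filter_upwards [hπg', hμg, condExp_add (hA.indicator hEg') (hΔ.indicator hEg') m, hselection,
    hgaps, hΔ_model] with ω hg' hμω haddω hsω hgω hΔω
  refine mul_right_cancel₀ (hε.trans_le hg').ne' ?_
  rw [Pi.add_apply] at haddω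
  linear_combination πg ω * hμω + πg ω * haddω - hsω - hgω + πg' ω * hΔω

theorem integral_indicator_sub_sub_eq_of_condExp [IsFiniteMeasure μ] (hm : m ≤ m0)
    (hEg : MeasurableSet Eg) (hΔY : Integrable ΔY μ) (hΔ : Integrable Δ μ) (hB : Integrable B μ)
    (hμg : StronglyMeasurable[m] μg) (hμg_int : Integrable μg μ)
    (hμc : StronglyMeasurable[m] μc) (hμc_int : Integrable μc μ)
    (hπg : πg =ᵐ[μ] μ[Eg.indicator (fun _ => (1 : ℝ)) | m])
    (hobs : Eg.indicator ΔY = Eg.indicator (B + Δ))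
    (hgap : (fun ω => (μg ω - μc ω) * πg ω) =ᵐ[μ] μ[Eg.indicator A | m]) :
    ∫ ω, Eg.indicator (fun ω => ΔY ω - μg ω) ω ∂μ - ∫ ω, Eg.indicator (fun ω => Δ ω - μc ω) ω ∂μ
      = ∫ ω, Eg.indicator B ω ∂μ - ∫ ω, Eg.indicator A ω ∂μ := by
  have hμ_int : Integrable (fun ω => μg ω - μc ω) μ := hμg_int.sub hμc_int
  have hmodels : ∫ ω, Eg.indicator (fun ω => μg ω - μc ω) ω ∂μ = ∫ ω, Eg.indicator A ω ∂μ := by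
    rw [← integral_condExp hm, ← integral_condExp hm (f := Eg.indicator A)]
    refine integral_congr_ae ?_
    filter_upwards [condExp_indicator_of_stronglyMeasurable (h := fun ω => μg ω - μc ω) hEg
      (hμg.sub hμc) hμ_int, hπg, hgap] with ω hω hπω hgω
    rw [hω, ← hπω, ← hgω]
  have hsplit : ∀ ω, Eg.indicator (fun ω => ΔY ω - μg ω) ω - Eg.indicator (fun ω => Δ ω - μc ω) ω
      = Eg.indicator B ω - Eg.indicator (fun ω => μg ω - μc ω) ω := by
    intro ω
    have hω := congrFun hobs ω
    by_cases hmem : ω ∈ Eg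
    · simp only [Set.indicator_of_mem hmem, Pi.add_apply] at hω ⊢
      linear_combination hω
    · simp [Set.indicator_of_notMem hmem]
  have hres_g : Integrable (Eg.indicator fun ω => ΔY ω - μg ω) μ := (hΔY.sub hμg_int).indicator hEg
  have hres_c : Integrable (Eg.indicator fun ω => Δ ω - μc ω) μ := (hΔ.sub hμc_int).indicator hEg
  rw [← integral_sub hres_g hres_c,
    integral_congr_ae (.of_forall hsplit), integral_sub (hB.indicator hEg) (hμ_int.indicator hEg),
    hmodels]

end Identification

section PotentialOutcomes

variable {Ω : Type*} {G : Ω → ℕ∞} {Y : ℕ → ℕ∞ → Ω → ℝ} {Yobs : ℕ → Ω → ℝ} {ω : Ω}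

theorem observed_change_of_cohort
    (hYobs : ∀ τ ω, Yobs τ ω = if G ω ≤ (τ : ℕ∞) then Y τ (G ω) ω else Y τ ⊤ ω)
    {g t : ℕ} (hg : 1 ≤ g) (hgt : g ≤ t) (hG : G ω = g) :
    Yobs t ω - Yobs (g - 1) ω = Y t g ω - Y (g - 1) ⊤ ω := by
  have hbefore : ¬ (g : ℕ∞) ≤ ((g - 1 : ℕ) : ℕ∞) := by exact_mod_cast (by omega : ¬ g ≤ g - 1)
  rw [hYobs, hYobs, hG, if_pos (by exact_mod_cast hgt), if_neg hbefore]

theorem observed_change_of_never_treated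
    (hYobs : ∀ τ ω, Yobs τ ω = if G ω ≤ (τ : ℕ∞) then Y τ (G ω) ω else Y τ ⊤ ω)
    (s t : ℕ) (hG : G ω = ⊤) : Yobs t ω - Yobs s ω = Y t ⊤ ω - Y s ⊤ ω := by
  simp [hYobs, hG]

theorem indicator_observed_change_of_cohort
    (hYobs : ∀ τ ω, Yobs τ ω = if G ω ≤ (τ : ℕ∞) then Y τ (G ω) ω else Y τ ⊤ ω)
    {g t : ℕ} (hg : 1 ≤ g) (hgt : g ≤ t) {E S : Set Ω} {Yσ : ℕ → ℕ∞ → Ω → ℝ} {ΔY Δ : Ω → ℝ}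
    (hE : E = {ω | G ω = g} ∩ S) (hYσ : ∀ τ γ, ∀ ω ∈ S, Y τ γ ω = Yσ τ γ ω)
    (hΔY : ΔY = fun ω => Yobs t ω - Yobs (g - 1) ω)
    (hΔ : Δ = fun ω => Yσ t ⊤ ω - Yσ (g - 1) ⊤ ω) :
    E.indicator ΔY = E.indicator ((fun ω => Yσ t g ω - Yσ t ⊤ ω) + Δ) := by
  subst hE hΔY hΔ
  refine Set.indicator_congr fun ω ⟨hG, hS⟩ => ?_
  rw [Pi.add_apply, observed_change_of_cohort hYobs hg hgt hG, hYσ _ _ _ hS, hYσ _ _ _ hS,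
    sub_add_sub_cancel]

theorem indicator_observed_change_of_never_treated
    (hYobs : ∀ τ ω, Yobs τ ω = if G ω ≤ (τ : ℕ∞) then Y τ (G ω) ω else Y τ ⊤ ω)
    {s t : ℕ} {E S : Set Ω} {Yσ : ℕ → ℕ∞ → Ω → ℝ} {ΔY Δ : Ω → ℝ}
    (hE : E = {ω | G ω = ⊤} ∩ S) (hYσ : ∀ τ γ, ∀ ω ∈ S, Y τ γ ω = Yσ τ γ ω)
    (hΔY : ΔY = fun ω => Yobs t ω - Yobs s ω) (hΔ : Δ = fun ω => Yσ t ⊤ ω - Yσ s ⊤ ω) :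
    E.indicator ΔY = E.indicator Δ := by
  subst hE hΔY hΔ
  refine Set.indicator_congr fun ω ⟨hG, hS⟩ => ?_
  rw [observed_change_of_never_treated hYobs s t hG, hYσ _ _ _ hS, hYσ _ _ _ hS]

end PotentialOutcomes

theorem cdatt_dr_identification_never_treated_general
    {Ω : Type*} [m0 : MeasurableSpace Ω] (μ : Measure Ω) [IsProbabilityMeasure μ]
    (G : Ω → ℕ∞) (hGmeas : Measurable G)
    (Ss : Set Ω) (hSs : MeasurableSet Ss)
    (Ys Ys' Y : ℕ → ℕ∞ → Ω → ℝ)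
    (hY : ∀ τ γ ω, Y τ γ ω = if ω ∈ Ss then Ys τ γ ω else Ys' τ γ ω)
    (hIntYs : ∀ τ γ, Integrable (Ys τ γ) μ)
    (hIntYs' : ∀ τ γ, Integrable (Ys' τ γ) μ)
    (Yobs : ℕ → Ω → ℝ)
    (hYobs : ∀ τ ω, Yobs τ ω = if G ω ≤ (τ : ℕ∞) then Y τ (G ω) ω else Y τ ⊤ ω)
    (hIntYobs : ∀ τ, Integrable (Yobs τ) μ)
    (g t : ℕ) (hg1 : 1 ≤ g) (hgt : g ≤ t)
    -- covariate σ-algebra and comparison event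
    (𝒳 : MeasurableSpace Ω) (h𝒳 : 𝒳 ≤ m0)
    (C : Set Ω) (hC : C = {ω | G ω = ⊤})
    -- group-subgroup events
    (Egs Egs' Ecs Ecs' : Set Ω)
    (hEgs : Egs = {ω | G ω = (g : ℕ∞)} ∩ Ss)
    (hEgs' : Egs' = {ω | G ω = (g : ℕ∞)} ∩ Ssᶜ)
    (hEcs : Ecs = C ∩ Ss) (hEcs' : Ecs' = C ∩ Ssᶜ)
    -- propensity scores: versions of the conditional expectations of indicators
    (πgs πgs' πcs πcs' : Ω → ℝ)
    (hπgs_meas : StronglyMeasurable[𝒳] πgs)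
    (hπgs : πgs =ᵐ[μ] μ[Egs.indicator (fun _ => (1 : ℝ)) | 𝒳])
    (hπgs'_meas : StronglyMeasurable[𝒳] πgs')
    (hπgs' : πgs' =ᵐ[μ] μ[Egs'.indicator (fun _ => (1 : ℝ)) | 𝒳])
    (hπcs_meas : StronglyMeasurable[𝒳] πcs)
    (hπcs : πcs =ᵐ[μ] μ[Ecs.indicator (fun _ => (1 : ℝ)) | 𝒳])
    (hπcs'_meas : StronglyMeasurable[𝒳] πcs')
    (hπcs' : πcs' =ᵐ[μ] μ[Ecs'.indicator (fun _ => (1 : ℝ)) | 𝒳])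
    -- overlap (Assumption 9)
    (ε : ℝ) (hε : 0 < ε)
    (p : ℝ) (hp : p = (μ Egs).toReal)
    (hπgs'_bd : ∀ᵐ ω ∂μ, ε ≤ πgs' ω)
    (hπcs_bd : ∀ᵐ ω ∂μ, ε ≤ πcs ω)
    (hπcs'_bd : ∀ᵐ ω ∂μ, ε ≤ πcs' ω)
    -- observed change and counterfactual untreated changes
    (ΔY Δs Δs' : Ω → ℝ)
    (hΔY : ΔY = fun ω => Yobs t ω - Yobs (g - 1) ω)
    (hΔs : Δs = fun ω => Ys t ⊤ ω - Ys (g - 1) ⊤ ω)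
    (hΔs' : Δs' = fun ω => Ys' t ⊤ ω - Ys' (g - 1) ⊤ ω)
    -- (a) conditional no subgroup selection
    (ha : (fun ω => (μ[Egs.indicator (fun ω' => Ys' t (g : ℕ∞) ω' - Ys' t ⊤ ω') | 𝒳]) ω * πgs' ω)
        =ᵐ[μ] fun ω => (μ[Egs'.indicator (fun ω' => Ys' t (g : ℕ∞) ω' - Ys' t ⊤ ω') | 𝒳]) ω * πgs ω)
    -- (b) conditional parallel trends within each subgroup
    (hb_s : (fun ω => (μ[Egs.indicator Δs | 𝒳]) ω * πcs ω)
        =ᵐ[μ] fun ω => (μ[Ecs.indicator Δs | 𝒳]) ω * πgs ω)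
    (hb_s' : (fun ω => (μ[Egs'.indicator Δs' | 𝒳]) ω * πcs' ω)
        =ᵐ[μ] fun ω => (μ[Ecs'.indicator Δs' | 𝒳]) ω * πgs' ω)
    -- (c) conditional parallel gaps across subgroups for the s'-counterfactual change
    (hc_g : (fun ω => (μ[Egs.indicator Δs' | 𝒳]) ω * πgs' ω)
        =ᵐ[μ] fun ω => (μ[Egs'.indicator Δs' | 𝒳]) ω * πgs ω)
    -- outcome models (𝒳-measurable, integrable)
    (μg' μc' : Ω → ℝ)
    (hμg'_meas : StronglyMeasurable[𝒳] μg') (hμg'_int : Integrable μg' μ)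
    (hμc'_meas : StronglyMeasurable[𝒳] μc') (hμc'_int : Integrable μc' μ)
    (hμg' : (fun ω => μg' ω * πgs' ω) =ᵐ[μ] μ[Egs'.indicator ΔY | 𝒳])
    (hμc' : (fun ω => μc' ω * πcs' ω) =ᵐ[μ] μ[Ecs'.indicator ΔY | 𝒳])
    -- weights
    (w₁ w₂ w₃ w₄ : Ω → ℝ)
    (hw₁ : w₁ = fun ω => Egs.indicator (fun _ => (1 : ℝ)) ω / p)
    (hw₂ : w₂ = fun ω => (Egs'.indicator (fun _ => (1 : ℝ)) ω * πgs ω / πgs' ω)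
        / ∫ ω', Egs'.indicator (fun _ => (1 : ℝ)) ω' * πgs ω' / πgs' ω' ∂μ)
    (hw₃ : w₃ = fun ω => (Ecs.indicator (fun _ => (1 : ℝ)) ω * πgs ω / πcs ω)
        / ∫ ω', Ecs.indicator (fun _ => (1 : ℝ)) ω' * πgs ω' / πcs ω' ∂μ)
    (hw₄ : w₄ = fun ω => (Ecs'.indicator (fun _ => (1 : ℝ)) ω * πgs ω / πcs' ω)
        / ∫ ω', Ecs'.indicator (fun _ => (1 : ℝ)) ω' * πgs ω' / πcs' ω' ∂μ) :
    -- doubly-robust estimand = CDATT(g,t)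
    (∫ ω, (w₁ ω - w₂ ω) * (ΔY ω - μg' ω) ∂μ)
      - (∫ ω, (w₃ ω - w₄ ω) * (ΔY ω - μc' ω) ∂μ)
    = (∫ ω, (Ys t (g : ℕ∞) ω - Ys t ⊤ ω) ∂(μ[|Egs]))
      - (∫ ω, (Ys' t (g : ℕ∞) ω - Ys' t ⊤ ω) ∂(μ[|Egs])) := by
  subst hC
  have hmG : MeasurableSet[m0] {ω | G ω = (g : ℕ∞)} := hGmeas (measurableSet_singleton _)
  have hmC : MeasurableSet[m0] {ω | G ω = ⊤} := hGmeas (measurableSet_singleton _)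
  have hmEgs : MeasurableSet[m0] Egs := hEgs ▸ hmG.inter hSs
  have hmEgs' : MeasurableSet[m0] Egs' := hEgs' ▸ hmG.inter hSs.compl
  have hmEcs : MeasurableSet[m0] Ecs := hEcs ▸ hmC.inter hSs
  have hmEcs' : MeasurableSet[m0] Ecs' := hEcs' ▸ hmC.inter hSs.compl
  have hPgs : IsPropensity 𝒳 μ Egs πgs := ⟨hπgs_meas, hπgs⟩
  have hYs : ∀ τ γ, ∀ ω ∈ Ss, Y τ γ ω = Ys τ γ ω := fun τ γ ω hω => by rw [hY, if_pos hω]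
  have hYs' : ∀ τ γ, ∀ ω ∈ Ssᶜ, Y τ γ ω = Ys' τ γ ω := fun τ γ ω hω => by rw [hY, if_neg hω]
  have hΔY_int : Integrable ΔY μ := hΔY ▸ (hIntYobs t).sub (hIntYobs (g - 1))
  have hΔs_int : Integrable Δs μ := hΔs ▸ (hIntYs t ⊤).sub (hIntYs (g - 1) ⊤)
  have hΔs'_int : Integrable Δs' μ := hΔs' ▸ (hIntYs' t ⊤).sub (hIntYs' (g - 1) ⊤)
  have hgap := model_sub_mul_eq_condExp_indicator_of_no_selection hmEgs'
    ((hIntYs' t g).sub (hIntYs' t ⊤)) hΔs'_int hε hπgs'_bd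
    (indicator_observed_change_of_cohort hYobs hg1 hgt hEgs' hYs' hΔY hΔs') hμg' ha hc_g
    (condExp_indicator_eq_model_mul_of_parallel hε hπgs'_bd hπcs'_bd
      (indicator_observed_change_of_never_treated hYobs hEcs' hYs' hΔY hΔs') hμc' hb_s' hc_g)
  rw [integral_sub_augmentation_mul_sub_of_indicator h𝒳 hmEgs hmEgs' hPgs ⟨hπgs'_meas, hπgs'⟩ hε
      hπgs'_bd hΔY_int hμg'_meas hμg'_int hμg' hw₁ hw₂,
    integral_sub_augmentation_mul_sub_of_balance h𝒳 hmEcs hmEcs' hmEgs hPgs ⟨hπcs_meas, hπcs⟩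
      ⟨hπcs'_meas, hπcs'⟩ hε hπcs_bd hπcs'_bd hΔY_int hΔs_int hμc'_meas hμc'_int hμc'
      (by rwa [← indicator_observed_change_of_never_treated hYobs hEcs hYs hΔY hΔs] at hb_s)
      hw₃ hw₄,
    integral_cond_eq_inv_mul_integral_indicator hmEgs,
    integral_cond_eq_inv_mul_integral_indicator hmEgs, measureReal_def, ← hp, ← mul_sub, ← mul_sub,
    integral_indicator_sub_sub_eq_of_condExp h𝒳 hmEgs hΔY_int hΔs_int
      ((hIntYs t g).sub (hIntYs t ⊤)) hμg'_meas hμg'_int hμc'_meas hμc'_int hπgs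
      (indicator_observed_change_of_cohort hYobs hg1 hgt hEgs hYs hΔY hΔs) hgap]
  rfl

/-- Proposition 3, doubly-robust identification of `CDATT(g,t)` with the
never-treated comparison group `C = {G = ∞}`:
`E[(w₁ − w₂)·(ΔY − μ^{s'}_g)] − E[(w₃ − w₄)·(ΔY − μ^{s'}_c)] = CDATT(g,t)`. -/
theorem cdatt_dr_identification_never_treated
    {Ω : Type*} [m0 : MeasurableSpace Ω] (μ : Measure Ω) [IsProbabilityMeasure μ]
    (T : ℕ) (hT : 1 ≤ T)
    (G : Ω → ℕ∞) (hGmeas : Measurable G)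
    (hGrange : ∀ ω, G ω = ⊤ ∨ (1 ≤ G ω ∧ G ω ≤ (T : ℕ∞)))
    (Ss : Set Ω) (hSs : MeasurableSet Ss)
    (Ys Ys' Y : ℕ → ℕ∞ → Ω → ℝ)
    (hY : ∀ τ γ ω, Y τ γ ω = if ω ∈ Ss then Ys τ γ ω else Ys' τ γ ω)
    (hIntYs : ∀ τ γ, Integrable (Ys τ γ) μ)
    (hIntYs' : ∀ τ γ, Integrable (Ys' τ γ) μ)
    (Yobs : ℕ → Ω → ℝ)
    (hYobs : ∀ τ ω, Yobs τ ω = if G ω ≤ (τ : ℕ∞) then Y τ (G ω) ω else Y τ ⊤ ω)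
    (hIntYobs : ∀ τ, Integrable (Yobs τ) μ)
    (g t : ℕ) (hg1 : 1 ≤ g) (hgt : g ≤ t) (htT : t ≤ T)
    -- covariate σ-algebra and comparison event
    (𝒳 : MeasurableSpace Ω) (h𝒳 : 𝒳 ≤ m0)
    (C : Set Ω) (hC : C = {ω | G ω = ⊤})
    -- group-subgroup events
    (Egs Egs' Ecs Ecs' : Set Ω)
    (hEgs : Egs = {ω | G ω = (g : ℕ∞)} ∩ Ss)
    (hEgs' : Egs' = {ω | G ω = (g : ℕ∞)} ∩ Ssᶜ)
    (hEcs : Ecs = C ∩ Ss) (hEcs' : Ecs' = C ∩ Ssᶜ)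
    -- propensity scores: versions of the conditional expectations of indicators
    (πgs πgs' πcs πcs' : Ω → ℝ)
    (hπgs_meas : StronglyMeasurable[𝒳] πgs)
    (hπgs : πgs =ᵐ[μ] μ[Egs.indicator (fun _ => (1 : ℝ)) | 𝒳])
    (hπgs'_meas : StronglyMeasurable[𝒳] πgs')
    (hπgs' : πgs' =ᵐ[μ] μ[Egs'.indicator (fun _ => (1 : ℝ)) | 𝒳])
    (hπcs_meas : StronglyMeasurable[𝒳] πcs)
    (hπcs : πcs =ᵐ[μ] μ[Ecs.indicator (fun _ => (1 : ℝ)) | 𝒳])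
    (hπcs'_meas : StronglyMeasurable[𝒳] πcs')
    (hπcs' : πcs' =ᵐ[μ] μ[Ecs'.indicator (fun _ => (1 : ℝ)) | 𝒳])
    -- overlap (Assumption 9)
    (ε : ℝ) (hε : 0 < ε)
    (p : ℝ) (hp : p = (μ Egs).toReal) (hpε : ε < p)
    (hπgs'_bd : ∀ᵐ ω ∂μ, ε ≤ πgs' ω)
    (hπcs_bd : ∀ᵐ ω ∂μ, ε ≤ πcs ω)
    (hπcs'_bd : ∀ᵐ ω ∂μ, ε ≤ πcs' ω)
    -- observed change and counterfactual untreated changes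
    (ΔY Δs Δs' : Ω → ℝ)
    (hΔY : ΔY = fun ω => Yobs t ω - Yobs (g - 1) ω)
    (hΔs : Δs = fun ω => Ys t ⊤ ω - Ys (g - 1) ⊤ ω)
    (hΔs' : Δs' = fun ω => Ys' t ⊤ ω - Ys' (g - 1) ⊤ ω)
    -- (a) conditional no subgroup selection
    (ha : (fun ω => (μ[Egs.indicator (fun ω' => Ys' t (g : ℕ∞) ω' - Ys' t ⊤ ω') | 𝒳]) ω * πgs' ω)
        =ᵐ[μ] fun ω => (μ[Egs'.indicator (fun ω' => Ys' t (g : ℕ∞) ω' - Ys' t ⊤ ω') | 𝒳]) ω * πgs ω)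
    -- (b) conditional parallel trends within each subgroup
    (hb_s : (fun ω => (μ[Egs.indicator Δs | 𝒳]) ω * πcs ω)
        =ᵐ[μ] fun ω => (μ[Ecs.indicator Δs | 𝒳]) ω * πgs ω)
    (hb_s' : (fun ω => (μ[Egs'.indicator Δs' | 𝒳]) ω * πcs' ω)
        =ᵐ[μ] fun ω => (μ[Ecs'.indicator Δs' | 𝒳]) ω * πgs' ω)
    -- (c) conditional parallel gaps across subgroups for the s'-counterfactual change
    (hc_g : (fun ω => (μ[Egs.indicator Δs' | 𝒳]) ω * πgs' ω)
        =ᵐ[μ] fun ω => (μ[Egs'.indicator Δs' | 𝒳]) ω * πgs ω)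
    (hc_c : (fun ω => (μ[Ecs.indicator Δs' | 𝒳]) ω * πcs' ω)
        =ᵐ[μ] fun ω => (μ[Ecs'.indicator Δs' | 𝒳]) ω * πcs ω)
    -- outcome models (𝒳-measurable, integrable)
    (μg' μc' : Ω → ℝ)
    (hμg'_meas : StronglyMeasurable[𝒳] μg') (hμg'_int : Integrable μg' μ)
    (hμc'_meas : StronglyMeasurable[𝒳] μc') (hμc'_int : Integrable μc' μ)
    (hμg' : (fun ω => μg' ω * πgs' ω) =ᵐ[μ] μ[Egs'.indicator ΔY | 𝒳])
    (hμc' : (fun ω => μc' ω * πcs' ω) =ᵐ[μ] μ[Ecs'.indicator ΔY | 𝒳])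
    -- weights
    (w₁ w₂ w₃ w₄ : Ω → ℝ)
    (hw₁ : w₁ = fun ω => Egs.indicator (fun _ => (1 : ℝ)) ω / p)
    (hw₂ : w₂ = fun ω => (Egs'.indicator (fun _ => (1 : ℝ)) ω * πgs ω / πgs' ω)
        / ∫ ω', Egs'.indicator (fun _ => (1 : ℝ)) ω' * πgs ω' / πgs' ω' ∂μ)
    (hw₃ : w₃ = fun ω => (Ecs.indicator (fun _ => (1 : ℝ)) ω * πgs ω / πcs ω)
        / ∫ ω', Ecs.indicator (fun _ => (1 : ℝ)) ω' * πgs ω' / πcs ω' ∂μ)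
    (hw₄ : w₄ = fun ω => (Ecs'.indicator (fun _ => (1 : ℝ)) ω * πgs ω / πcs' ω)
        / ∫ ω', Ecs'.indicator (fun _ => (1 : ℝ)) ω' * πgs ω' / πcs' ω' ∂μ) :
    -- doubly-robust estimand = CDATT(g,t)
    (∫ ω, (w₁ ω - w₂ ω) * (ΔY ω - μg' ω) ∂μ)
      - (∫ ω, (w₃ ω - w₄ ω) * (ΔY ω - μc' ω) ∂μ)
    = (∫ ω, (Ys t (g : ℕ∞) ω - Ys t ⊤ ω) ∂(μ[|Egs]))
      - (∫ ω, (Ys' t (g : ℕ∞) ω - Ys' t ⊤ ω) ∂(μ[|Egs])) :=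
  cdatt_dr_identification_never_treated_general (m0 := m0) μ G hGmeas Ss hSs Ys Ys' Y hY hIntYs
    hIntYs' Yobs hYobs hIntYobs g t hg1 hgt 𝒳 h𝒳 C hC Egs Egs' Ecs Ecs' hEgs hEgs' hEcs hEcs' πgs
    πgs' πcs πcs' hπgs_meas hπgs hπgs'_meas hπgs' hπcs_meas hπcs hπcs'_meas hπcs' ε hε p hp hπgs'_bd
    hπcs_bd hπcs'_bd ΔY Δs Δs' hΔY hΔs hΔs' ha hb_s hb_s' hc_g μg' μc' hμg'_meas hμg'_int hμc'_meas
    hμc'_int hμg' hμc' w₁ w₂ w₃ w₄ hw₁ hw₂ hw₃ hw₄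
end
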